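/- arXiv:1711.07100 — 8 statements merged into one kernel-verified Lean document; each statement's English description precedes it below -/
import Mathlib

section
/- Fix an integer p ≥ 1 and a real number x. Define polynomials Ω_n^(p)(y) in the variable y by Ω_0^(p)(y) = 1, Ω_1^(p)(y) = y − x + p/2, and, for n ≥ 1, Ω_{n+1}^(p)(y) = (y − x + p/2)·Ω_n^(p)(y) + (n(n+p−1)/4)·Ω_{n−1}^(p)(y). Then the Ω_n^(p) are the monic orthogonal polynomials with respect to the sequence E_n^(p)(x): for all integers r, n with 0 ≤ r < n, L(y^r · Ω_n^(p)(y)) = 0. -/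
/-!
The moments `E_n = E_n^(p)(x)` are the Taylor coefficients at `0` of
`f z = (2 / (e^z + 1))^p e^(x z)`, which solves `(1 + e^z) f' = (x (1 + e^z) - p e^z) f`.
By the Leibniz rule this differential equation becomes a recurrence for the moments, which says
exactly that `L ((y - x + p) q(y + 1) + (y - x) q(y)) = 0` for every polynomial `q`. Hence the
difference operator `D q = (y - x + p) q(y + 1) - (y - x) q(y - 1)` is symmetric for the bilinear
form `(q, s) ↦ L (q s)`. With `λ_n = n (n + p - 1) / 4`, the three-term recurrence gives for
`r = ±1` the contiguous relations
`(y - x + (1 + r) p / 2) Ω_n(y + r) = Ω_{n+1} + r (n + p / 2) Ω_n + λ_n Ω_{n-1}`,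
whose difference says that `Ω_n` is an eigenvector of `D` with eigenvalue `2 n + p`. So the `Ω_n`
are pairwise orthogonal, and as `deg Ω_n = n` the `Ω_m` with `m < n` span all polynomials of
degree `< n`.
-/

open Polynomial Finset Filter Topology

open scoped Nat NNReal

section TaylorCoefficients

theorem hasFPowerSeriesOnBall_ofScalars_of_hasSum {c : ℕ → ℂ} {F : ℂ → ℂ} {R : ℝ≥0}
    (hR : 0 < R) (h : ∀ z : ℂ, ‖z‖ < R → HasSum (fun n => c n * z ^ n) (F z)) :
    HasFPowerSeriesOnBall F (FormalMultilinearSeries.ofScalars ℂ c) 0 R where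
  r_le := ENNReal.le_of_forall_nnreal_lt fun r hr => by
    refine FormalMultilinearSeries.le_radius_of_tendsto _ (l := 0) ?_
    simpa using (h r (by simpa using hr)).summable.tendsto_atTop_zero.norm
  r_pos := by simpa using hR
  hasSum {z} hz := by
    simpa [FormalMultilinearSeries.ofScalars_apply_eq, mul_comm] using h z (by simpa using hz)

theorem iteratedDeriv_eq_of_hasSum_div_factorial {a : ℕ → ℂ} {F : ℂ → ℂ} {R : ℝ≥0}
    (hR : 0 < R) (h : ∀ z : ℂ, ‖z‖ < R → HasSum (fun n => a n * z ^ n / n !) (F z))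
    (n : ℕ) :
    iteratedDeriv n F 0 = a n := by
  have hF := hasFPowerSeriesOnBall_ofScalars_of_hasSum (c := fun n => a n / n !) hR
    fun z hz => by simpa only [div_mul_eq_mul_div] using h z hz
  have hcoeff := congrFun (FormalMultilinearSeries.ofScalars_series_injective ℂ (E := ℂ)
    (hF.analyticAt.hasFPowerSeriesAt.eq_formalMultilinearSeries hF.hasFPowerSeriesAt)) n
  exact (div_left_inj' (mod_cast n.factorial_ne_zero)).mp hcoeff

theorem iteratedDeriv_cexp_zero (n : ℕ) : iteratedDeriv n Complex.exp 0 = 1 := by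
  rw [iteratedDeriv_eq_iterate, Complex.iter_deriv_exp, Complex.exp_zero]

end TaylorCoefficients

section EulerGeneratingFunction

noncomputable def eulerGenFun (p : ℕ) (x z : ℂ) : ℂ :=
  (2 / (Complex.exp z + 1)) ^ p * Complex.exp (x * z)

theorem hasDerivAt_eulerGenFun (p : ℕ) (x : ℂ) {z : ℂ} (hz : Complex.exp z + 1 ≠ 0) :
    HasDerivAt (eulerGenFun p x)
      ((x - p * Complex.exp z / (Complex.exp z + 1)) * eulerGenFun p x z) z := by
  have hu : HasDerivAt (fun w => 2 / (Complex.exp w + 1))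
      ((0 * (Complex.exp z + 1) - 2 * Complex.exp z) / (Complex.exp z + 1) ^ 2) z :=
    (hasDerivAt_const z (2 : ℂ)).fun_div ((Complex.hasDerivAt_exp z).add_const 1) hz
  have hv : HasDerivAt (fun w => Complex.exp (x * w)) (Complex.exp (x * z) * x) z := by
    simpa using ((hasDerivAt_id z).const_mul x).cexp
  refine ((hu.pow p).mul hv).congr_deriv ?_
  unfold eulerGenFun
  rcases p with _ | q
  · simp [mul_comm]
  · have hu' : (0 * (Complex.exp z + 1) - 2 * Complex.exp z) / (Complex.exp z + 1) ^ 2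
        = -(Complex.exp z / (Complex.exp z + 1)) * (2 / (Complex.exp z + 1)) := by
      field_simp
      ring
    simp only [Pi.pow_apply, hu', Nat.add_sub_cancel]
    push_cast
    ring

theorem eventually_cexp_add_one_ne_zero : ∀ᶠ z in 𝓝 (0 : ℂ), Complex.exp z + 1 ≠ 0 :=
  (Complex.continuous_exp.add continuous_const).continuousAt.eventually_ne (by norm_num)

theorem analyticAt_eulerGenFun (p : ℕ) (x : ℂ) : AnalyticAt ℂ (eulerGenFun p x) 0 :=
  Complex.analyticAt_iff_eventually_differentiableAt.mpr <|
    eventually_cexp_add_one_ne_zero.mono fun _ hz =>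
      (hasDerivAt_eulerGenFun p x hz).differentiableAt

theorem eulerGenFun_ode (p : ℕ) (x : ℂ) :
    (fun z => deriv (eulerGenFun p x) z + deriv (eulerGenFun p x) z * Complex.exp z)
      =ᶠ[𝓝 0]
        fun z => x * eulerGenFun p x z + (x - p) * (eulerGenFun p x z * Complex.exp z) := by
  refine eventually_cexp_add_one_ne_zero.mono fun z hz => ?_
  dsimp only
  rw [(hasDerivAt_eulerGenFun p x hz).deriv]
  field_simp
  ring

theorem iteratedDeriv_eulerGenFun_recurrence (p : ℕ) (x : ℂ) (n : ℕ) :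
    iteratedDeriv (n + 1) (eulerGenFun p x) 0
      + ∑ k ∈ range (n + 1), n.choose k * iteratedDeriv (k + 1) (eulerGenFun p x) 0
      = x * iteratedDeriv n (eulerGenFun p x) 0
        + (x - p) * ∑ k ∈ range (n + 1), n.choose k * iteratedDeriv k (eulerGenFun p x) 0 := by
  have hf := (analyticAt_eulerGenFun p x).contDiffAt (n := n)
  have hf' := (analyticAt_eulerGenFun p x).deriv.contDiffAt (n := n)
  have hexp : ContDiffAt ℂ n Complex.exp 0 := Complex.contDiff_exp.contDiffAt
  have h := (eulerGenFun_ode p x).iteratedDeriv_eq n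
  rw [iteratedDeriv_fun_add hf' (hf'.mul hexp), iteratedDeriv_fun_mul hf' hexp,
    iteratedDeriv_fun_add (contDiffAt_const.mul hf) (contDiffAt_const.mul (hf.mul hexp)),
    iteratedDeriv_const_mul_field, iteratedDeriv_const_mul_field,
    iteratedDeriv_fun_mul hf hexp] at h
  simpa only [iteratedDeriv_cexp_zero, mul_one, ← iteratedDeriv_succ'] using h

theorem eulerMoment_recurrence (p : ℕ) (x : ℝ) (E : ℕ → ℝ)
    (hE : ∀ z : ℂ, ‖z‖ < 1 →
      HasSum (fun n : ℕ => (E n : ℂ) * z ^ n / (n.factorial : ℂ))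
        ((2 / (Complex.exp z + 1)) ^ p * Complex.exp (x * z)))
    (n : ℕ) :
    E (n + 1) + ∑ k ∈ range (n + 1), n.choose k * E (k + 1)
      = x * E n + (x - p) * ∑ k ∈ range (n + 1), n.choose k * E k := by
  have hcoeff := iteratedDeriv_eq_of_hasSum_div_factorial (F := eulerGenFun p x) one_pos
    fun z hz => hE z (by simpa using hz)
  have h := iteratedDeriv_eulerGenFun_recurrence p x n
  simp only [hcoeff] at h
  exact_mod_cast h

end EulerGeneratingFunction

section ShiftOperator

variable {R : Type*} [CommRing R]

theorem apply_mul_taylor_one_X_pow (L : R[X] →ₗ[R] R) (c : R) (n : ℕ) :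
    L ((X + C c) * taylor 1 (X ^ n)) =
      ∑ k ∈ range (n + 1), n.choose k * L (X ^ (k + 1))
        + c * ∑ k ∈ range (n + 1), n.choose k * L (X ^ k) := by
  have h : (X + C c) * taylor 1 (X ^ n : R[X]) =
      ∑ k ∈ range (n + 1), ((n.choose k : R) • X ^ (k + 1) + (c * n.choose k) • X ^ k) := by
    rw [taylor_X_pow, map_one, add_pow, mul_sum]
    refine sum_congr rfl fun k _ => ?_
    simp only [one_pow, mul_one, smul_eq_C_mul, C_mul, ← C_eq_natCast]
    ring
  simp only [h, map_sum, map_add, map_smul, smul_eq_mul, sum_add_distrib, mul_sum, mul_assoc]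

theorem apply_mul_taylor_one_add_mul_eq_zero (L : R[X] →ₗ[R] R) (x a : R)
    (hL : ∀ n, L (X ^ (n + 1)) + ∑ k ∈ range (n + 1), n.choose k * L (X ^ (k + 1))
      = x * L (X ^ n) + (x - a) * ∑ k ∈ range (n + 1), n.choose k * L (X ^ k))
    (q : R[X]) : L ((X - C x + C a) * taylor 1 q + (X - C x) * q) = 0 := by
  induction q using Polynomial.induction_on' with
  | add f g hf hg =>
    have h : (X - C x + C a) * taylor 1 (f + g) + (X - C x) * (f + g)
        = ((X - C x + C a) * taylor 1 f + (X - C x) * f)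
          + ((X - C x + C a) * taylor 1 g + (X - C x) * g) := by
      rw [map_add]
      ring
    rw [h, map_add, hf, hg, add_zero]
  | monomial n c =>
    have h : (X - C x + C a) * taylor 1 (monomial n c) + (X - C x) * monomial n c
        = c • ((X + C (a - x)) * taylor 1 (X ^ n) + (X ^ (n + 1) - x • X ^ n)) := by
      rw [← C_mul_X_pow_eq_monomial, ← smul_eq_C_mul, map_smul]
      simp only [smul_eq_C_mul, C_sub]
      ring
    rw [h, map_smul, map_add, apply_mul_taylor_one_X_pow, map_sub, map_smul, smul_eq_mul,
      smul_eq_mul]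
    linear_combination c * hL n

noncomputable def shiftOp (A B : R[X]) : R[X] →ₗ[R] R[X] :=
  LinearMap.mulLeft R A ∘ₗ taylor 1 - LinearMap.mulLeft R B ∘ₗ taylor (-1)

theorem shiftOp_apply (A B q : R[X]) :
    shiftOp A B q = A * taylor 1 q - B * taylor (-1) q := rfl

theorem taylor_one_taylor_neg_one (q : R[X]) : taylor 1 (taylor (-1) q) = q := by
  rw [taylor_taylor, add_neg_cancel, taylor_zero]

theorem apply_mul_shiftOp_comm (L : R[X] →ₗ[R] R) {A B : R[X]}
    (hL : ∀ h, L (A * taylor 1 h + B * h) = 0) (q s : R[X]) :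
    L (s * shiftOp A B q) = L (q * shiftOp A B s) := by
  have key : s * shiftOp A B q - q * shiftOp A B s
      = A * taylor 1 (taylor (-1) s * q - taylor (-1) q * s)
        + B * (taylor (-1) s * q - taylor (-1) q * s) := by
    simp only [shiftOp_apply, map_sub, taylor_mul, taylor_one_taylor_neg_one]
    ring
  rw [← sub_eq_zero, ← map_sub, key, hL]

end ShiftOperator

section Eigenvectors

variable {K : Type*} [Field K] [CharZero K]

theorem mul_taylor_eq_of_recurrence {x a r : K} (hr : r * r = 1) {Ω : ℕ → K[X]}
    (hΩ0 : Ω 0 = 1)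
    (hΩ1 : Ω 1 = X - C x + C (a / 2))
    (hΩrec : ∀ n : ℕ, 1 ≤ n →
      Ω (n + 1) = (X - C x + C (a / 2)) * Ω n + C ((n : K) * ((n : K) + a - 1) / 4) * Ω (n - 1))
    (n : ℕ) :
    (X - C x + C (a / 2) + C (r * (a / 2))) * taylor r (Ω n)
      = Ω (n + 1) + C (r * (n + a / 2)) * Ω n
        + C ((n : K) * ((n : K) + a - 1) / 4) * Ω (n - 1) := by
  set W : K[X] := X - C x + C (a / 2)
  set lam : ℕ → K := fun n => n * (n + a - 1) / 4 with hlam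
  have hWr : taylor r W = W + C r := by simp [W]; ring
  have hr' : C r * C r = 1 := by rw [← C_mul, hr, C_1]
  have hrec (n : ℕ) : Ω (n + 2) = W * Ω (n + 1) + C (lam (n + 1)) * Ω n := by
    simpa only [Nat.add_sub_cancel, hlam] using hΩrec (n + 1) le_add_self
  have hlam0 : lam 0 = 0 := by simp [hlam]
  have hrecW (n : ℕ) : W * Ω n = Ω (n + 1) - C (lam n) * Ω (n - 1) := by
    rcases n with _ | n
    · simp [hΩ0, hΩ1, hlam0]
    · rw [hrec, Nat.add_sub_cancel]; ring
  have hlam_succ (k : ℕ) : 2 * C (lam (k + 1)) = 2 * C (lam k) + k + C (a / 2) := by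
    rw [← map_ofNat C 2, ← C_mul, ← C_mul, ← map_natCast C, ← C_add, ← C_add]
    congr 1
    simp only [hlam]
    push_cast
    ring
  change (W + C (r * (a / 2))) * taylor r (Ω n)
    = Ω (n + 1) + C (r * (n + a / 2)) * Ω n + C (lam n) * Ω (n - 1)
  induction n using Nat.twoStepInduction with
  | zero => simp [hΩ0, hΩ1, hlam0]
  | one =>
    have hrec₀ := hrec 0
    have hl := hlam_succ 0
    simp only [hΩ0, hΩ1, hlam0, map_mul, map_add, map_one, C_0, hWr, Nat.cast_zero,
      Nat.cast_one, zero_add, Nat.sub_self, mul_one] at hrec₀ hl ⊢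
    linear_combination C (a / 2) * hr' - hrec₀ - hl
  | more n ih₀ ih₁ =>
    have hT : taylor r (Ω (n + 2))
        = (W + C r) * taylor r (Ω (n + 1)) + C (lam (n + 1)) * taylor r (Ω n) := by
      rw [hrec n, map_add, taylor_mul, taylor_mul, hWr, taylor_C]
    have hrec₁ := hrec (n + 1)
    have hrec₀ := hrec n
    have hrecW₀ := hrecW n
    have hl := hlam_succ (n + 1)
    simp only [map_mul, map_add, map_natCast, Nat.add_sub_cancel, add_assoc, Nat.reduceAdd]
      at ih₀ ih₁ hrec₁ hl ⊢
    push_cast at ih₀ ih₁ hrec₁ hl ⊢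
    linear_combination (W + C r * C (a / 2)) * hT + (W + C r) * ih₁ + C (lam (n + 1)) * ih₀
      - hrec₁ - C r * ((n : K[X]) + 1 + C (a / 2)) * hrec₀ + C (lam (n + 1)) * hrecW₀
      + Ω (n + 1) * ((n : K[X]) + 1 + C (a / 2)) * hr' - Ω (n + 1) * hl

theorem shiftOp_eq_smul_of_recurrence {x a : K} {Ω : ℕ → K[X]} (hΩ0 : Ω 0 = 1)
    (hΩ1 : Ω 1 = X - C x + C (a / 2))
    (hΩrec : ∀ n : ℕ, 1 ≤ n →
      Ω (n + 1) = (X - C x + C (a / 2)) * Ω n + C ((n : K) * ((n : K) + a - 1) / 4) * Ω (n - 1))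
    (n : ℕ) : shiftOp (X - C x + C a) (X - C x) (Ω n) = (2 * n + a) • Ω n := by
  have hfwd := mul_taylor_eq_of_recurrence (r := 1) (mul_one 1) hΩ0 hΩ1 hΩrec n
  have hbwd := mul_taylor_eq_of_recurrence (r := -1) (by norm_num) hΩ0 hΩ1 hΩrec n
  have hCa : C a = 2 * C (a / 2) := by
    rw [← map_ofNat C 2, ← C_mul, mul_div_cancel₀ _ two_ne_zero]
  rw [shiftOp_apply, ← C_mul']
  simp only [one_mul, neg_one_mul, map_neg, map_add, map_mul, map_natCast, map_ofNat]
    at hfwd hbwd ⊢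
  linear_combination hfwd - hbwd + (taylor 1 (Ω n) - Ω n) * hCa

end Eigenvectors

section Orthogonality

variable {K : Type*} [Field K]

theorem degree_eq_of_recurrence {W : K[X]} (hW : W.degree = 1) {μ : ℕ → K} {Ω : ℕ → K[X]}
    (hΩ0 : Ω 0 = 1) (hΩ1 : Ω 1 = W)
    (hΩrec : ∀ n : ℕ, 1 ≤ n → Ω (n + 1) = W * Ω n + C (μ n) * Ω (n - 1)) (n : ℕ) :
    (Ω n).degree = n := by
  induction n using Nat.twoStepInduction with
  | zero => simp [hΩ0]
  | one => simp [hΩ1, hW]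
  | more n ih₀ ih₁ =>
    have hlead : (W * Ω (n + 1)).degree = ↑(n + 2) := by
      rw [degree_mul, hW, ih₁]
      norm_cast
      omega
    have htail : (C (μ (n + 1)) * Ω n).degree < (W * Ω (n + 1)).degree := by
      rw [hlead, C_mul']
      exact (degree_smul_le _ _).trans_lt (by rw [ih₀]; exact_mod_cast (by omega : n < n + 2))
    rw [hΩrec (n + 1) le_add_self, Nat.add_sub_cancel, degree_add_eq_left_of_degree_lt htail,
      hlead]

theorem apply_mul_eq_zero_of_eigen {A : Type*} [CommRing A] [Algebra K A] (L : A →ₗ[K] K)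
    {D : A → A} (hD : ∀ q s, L (s * D q) = L (q * D s)) {u v : A} {α β : K}
    (hu : D u = α • u) (hv : D v = β • v) (hαβ : α ≠ β) : L (u * v) = 0 := by
  have h := hD v u
  rw [hu, hv, mul_smul_comm, mul_smul_comm, map_smul, map_smul, smul_eq_mul, smul_eq_mul,
    mul_comm v u] at h
  exact (mul_eq_zero.mp (by linear_combination h : (β - α) * L (u * v) = 0)).resolve_left
    (sub_ne_zero.mpr hαβ.symm)

theorem apply_mul_eq_zero_of_degree_lt (L : K[X] →ₗ[K] K) (S : Sequence K) {n : ℕ}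
    (horth : ∀ m < n, L (S m * S n) = 0) {q : K[X]} (hq : q.degree < n) : L (q * S n) = 0 := by
  have hspan : q ∈ Submodule.span K (S '' Set.Iio n) := by
    rw [Sequence.span_degreeLT S fun i _ => (leadingCoeff_ne_zero.mpr (S.ne_zero i)).isUnit]
    exact mem_degreeLT.mpr hq
  have hle :
      Submodule.span K (S '' Set.Iio n) ≤ LinearMap.ker (L ∘ₗ LinearMap.mulRight K (S n)) :=
    Submodule.span_le.mpr <| by
      rintro _ ⟨m, hm, rfl⟩
      exact horth m hm
  exact hle hspan

end Orthogonality

theorem stmt_0_general (p : ℕ) (x : ℝ)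
    (E : ℕ → ℝ)
    (hE : ∀ z : ℂ, ‖z‖ < 1 →
      HasSum (fun n : ℕ => (E n : ℂ) * z ^ n / (n.factorial : ℂ))
        ((2 / (Complex.exp z + 1)) ^ p * Complex.exp (x * z)))
    (L : Polynomial ℝ →ₗ[ℝ] ℝ)
    (hL : ∀ k : ℕ, L (X ^ k) = E k)
    (Ω : ℕ → Polynomial ℝ)
    (hΩ0 : Ω 0 = 1)
    (hΩ1 : Ω 1 = X - C x + C ((p : ℝ) / 2))
    (hΩrec : ∀ n : ℕ, 1 ≤ n →
      Ω (n + 1) = (X - C x + C ((p : ℝ) / 2)) * Ω n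
        + C ((n : ℝ) * ((n : ℝ) + (p : ℝ) - 1) / 4) * Ω (n - 1)) :
    ∀ r n : ℕ, r < n → L (X ^ r * Ω n) = 0 := by
  have hmoment := apply_mul_taylor_one_add_mul_eq_zero L x p fun n => by
    simpa only [hL] using eulerMoment_recurrence p x E hE n
  have hsymm := apply_mul_shiftOp_comm L hmoment
  have heigen := shiftOp_eq_smul_of_recurrence hΩ0 hΩ1 hΩrec
  have hdeg := degree_eq_of_recurrence
    (by rw [degree_add_C (by rw [degree_X_sub_C]; exact one_pos), degree_X_sub_C]) hΩ0 hΩ1 hΩrec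
  intro r n hrn
  refine apply_mul_eq_zero_of_degree_lt L ⟨Ω, hdeg⟩
    (fun m hm => apply_mul_eq_zero_of_eigen L hsymm (heigen m) (heigen n) ?_) ?_
  · exact fun h => hm.ne (by exact_mod_cast (by linarith : (m : ℝ) = n))
  · rw [degree_X_pow]
    exact_mod_cast hrn

/-- The polynomials `Ω_n^(p)` defined by the three-term recurrence
`Ω_0 = 1`, `Ω_1 = y - x + p/2`,
`Ω_{n+1} = (y - x + p/2) Ω_n + (n(n+p-1)/4) Ω_{n-1}`
are orthogonal with respect to the linear functional `L` whose moments are the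
higher-order Euler polynomial values `E_n^(p)(x)` (defined by the EGF
`(2/(e^z+1))^p e^{xz} = Σ E_n^(p)(x) z^n/n!`). -/
theorem stmt_0 (p : ℕ) (hp : 1 ≤ p) (x : ℝ)
    (E : ℕ → ℝ)
    (hE : ∀ z : ℂ, ‖z‖ < 1 →
      HasSum (fun n : ℕ => (E n : ℂ) * z ^ n / (n.factorial : ℂ))
        ((2 / (Complex.exp z + 1)) ^ p * Complex.exp (x * z)))
    (L : Polynomial ℝ →ₗ[ℝ] ℝ)
    (hL : ∀ k : ℕ, L (X ^ k) = E k)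
    (Ω : ℕ → Polynomial ℝ)
    (hΩ0 : Ω 0 = 1)
    (hΩ1 : Ω 1 = X - C x + C ((p : ℝ) / 2))
    (hΩrec : ∀ n : ℕ, 1 ≤ n →
      Ω (n + 1) = (X - C x + C ((p : ℝ) / 2)) * Ω n
        + C ((n : ℝ) * ((n : ℝ) + (p : ℝ) - 1) / 4) * Ω (n - 1)) :
    ∀ r n : ℕ, r < n → L (X ^ r * Ω n) = 0 :=
  stmt_0_general p x E hE L hL Ω hΩ0 hΩ1 hΩrec
end

section
/- Fix an integer p ≥ 1 and a real number x. Let 𝔈_{n,k}^(p) be the generalized Motzkin numbers obtained from the choices σ_k = x − p/2 (for all k ≥ 0) and τ_k = −k(k+p−1)/4 (for all k ≥ 1). Then for every n ≥ 0, 𝔈_{n,0}^(p) = E_n^(p)(x). -/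
/-!
Work with the formal power series `G = (2 / (eˣ + 1))^p e^{xX}` and `T = 2 tanh (X/2)
= 2 (eˣ - 1) / (eˣ + 1)`. The Riccati equation `4 T' = 4 - T²` and `4 G' = (4x - 2p - pT) G`
show that the columns `C_k = G T^k / k!` satisfy
`C_k' = C_{k-1} + (x - p/2) C_k - (k+1)(k+p)/4 · C_{k+1}`; read on coefficients this is the
Motzkin recurrence, and since `T` has no constant term, `n! [Xⁿ] C_k = 0` for `n < k`. So the
Motzkin array is `n! [Xⁿ] C_k`, and its column `k = 0` is `n! [Xⁿ] G`.

To identify `n! [Xⁿ] G` with `E_n`, multiply the expansion of `(2 / (eᶻ + 1))^p e^{xz}` by the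
entire expansion of `(eᶻ + 1)^p`: the Cauchy product converges on the unit disc to `2^p e^{xz}`,
so by uniqueness of power series coefficients
`(Σ E_n Xⁿ / n!) (eˣ + 1)^p = 2^p e^{xX} = G (eˣ + 1)^p` as formal power series, and
`(eˣ + 1)^p` can be cancelled.
-/

open scoped Nat NNReal ENNReal

open FormalMultilinearSeries

section Motzkin

variable {R : Type*} [Semiring R]

structure IsMotzkinArray (σ τ : ℕ → R) (M : ℕ → ℕ → R) : Prop where
  zero_zero : M 0 0 = 1
  eq_zero_of_lt : ∀ n k, n < k → M n k = 0
  succ_zero : ∀ n, M (n + 1) 0 = σ 0 * M n 0 + τ 1 * M n 1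
  succ_succ : ∀ n k,
    M (n + 1) (k + 1) = M n k + σ (k + 1) * M n (k + 1) + τ (k + 2) * M n (k + 2)

theorem IsMotzkinArray.unique {σ τ : ℕ → R} {M M' : ℕ → ℕ → R}
    (hM : IsMotzkinArray σ τ M) (hM' : IsMotzkinArray σ τ M') : M = M' := by
  funext n
  induction n with
  | zero =>
    funext k
    rcases k with _ | k
    · rw [hM.zero_zero, hM'.zero_zero]
    · rw [hM.eq_zero_of_lt 0 _ k.succ_pos, hM'.eq_zero_of_lt 0 _ k.succ_pos]
  | succ n ih =>
    funext k
    rcases k with _ | k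
    · rw [hM.succ_zero, hM'.succ_zero, ih]
    · rw [hM.succ_succ, hM'.succ_succ, ih]

end Motzkin

theorem Complex.exp_add_one_ne_zero_of_norm_lt_one {z : ℂ} (hz : ‖z‖ < 1) :
    Complex.exp z + 1 ≠ 0 := by
  intro h
  have h2 : Complex.exp z - 1 = -2 := by linear_combination h
  have := Complex.norm_exp_sub_one_le hz.le
  rw [h2, norm_neg, Complex.norm_ofNat] at this
  linarith

namespace PowerSeries

theorem derivative_rescale {R : Type*} [CommSemiring R] (a : R) (f : R⟦X⟧) :
    d⁄dX R (rescale a f) = C a * rescale a (d⁄dX R f) := by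
  ext n
  simp only [coeff_derivative, coeff_rescale, coeff_C_mul, pow_succ]
  ring

theorem factorial_mul_coeff_succ {R : Type*} [CommSemiring R] (f : R⟦X⟧) (n : ℕ) :
    ((n + 1) ! : R) * coeff (n + 1) f = n ! * coeff n (d⁄dX R f) := by
  rw [coeff_derivative, Nat.factorial_succ]
  push_cast
  ring

theorem derivative_two {R : Type*} [CommSemiring R] : d⁄dX R (2 : R⟦X⟧) = 0 := by
  exact_mod_cast (d⁄dX R).map_natCast 2

variable {K : Type*} [Field K] [CharZero K]

theorem exp_add_one_mul_inv : (exp K + 1) * (exp K + 1)⁻¹ = 1 :=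
  PowerSeries.mul_inv_cancel _ (by simp [constantCoeff_exp, one_add_one_eq_two])

theorem exp_add_one_ne_zero : exp K + 1 ≠ 0 :=
  left_ne_zero_of_mul_eq_one exp_add_one_mul_inv

noncomputable def twoTanhHalf (K : Type*) [Field K] [CharZero K] : K⟦X⟧ :=
  2 * (exp K - 1) * (exp K + 1)⁻¹

noncomputable def eulerEGF (p : ℕ) (x : K) : K⟦X⟧ :=
  (2 * (exp K + 1)⁻¹) ^ p * rescale x (exp K)

theorem eulerEGF_mul_exp_add_one_pow (p : ℕ) (x : K) :
    eulerEGF p x * (exp K + 1) ^ p = C (2 ^ p) * rescale x (exp K) := by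
  rw [eulerEGF, map_pow, map_ofNat, mul_right_comm, ← mul_pow, mul_assoc,
    mul_comm (exp K + 1)⁻¹, exp_add_one_mul_inv, mul_one]

theorem four_mul_derivative_twoTanhHalf :
    4 * d⁄dX K (twoTanhHalf K) = 4 - twoTanhHalf K ^ 2 := by
  simp only [twoTanhHalf, Derivation.leibniz, derivative_inv', map_sub, map_add, derivative_exp,
    Derivation.map_one_eq_zero, smul_eq_mul]
  rw [derivative_two]
  linear_combination (4 - 4 * (exp K - 1) * (exp K + 1)⁻¹) * (exp_add_one_mul_inv (K := K))

theorem four_mul_derivative_eulerEGF (p : ℕ) (x : K) :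
    C 4 * d⁄dX K (eulerEGF p x) =
      C (4 * x - 2 * p) * eulerEGF p x - C (p : K) * (eulerEGF p x * twoTanhHalf K) := by
  simp only [map_mul, map_sub, map_ofNat, map_natCast]
  induction p with
  | zero =>
    simp [eulerEGF, derivative_rescale, derivative_exp]
    ring
  | succ p ih =>
    have hsucc : eulerEGF (p + 1) x = 2 * (exp K + 1)⁻¹ * eulerEGF p x := by
      rw [eulerEGF, eulerEGF, pow_succ]; ring
    rw [hsucc, Derivation.leibniz, Derivation.leibniz, derivative_inv', map_add, derivative_exp,
      Derivation.map_one_eq_zero, derivative_two, smul_eq_mul, smul_eq_mul, smul_eq_mul]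
    rw [twoTanhHalf] at ih ⊢
    push_cast at *
    linear_combination 2 * (exp K + 1)⁻¹ * ih
      - 4 * eulerEGF p x * (exp K + 1)⁻¹ * exp_add_one_mul_inv (K := K)

theorem four_mul_derivative_eulerEGF_mul_twoTanhHalf_pow (p k : ℕ) (x : K) :
    C 4 * d⁄dX K (eulerEGF p x * twoTanhHalf K ^ (k + 1)) =
      C (4 * (k + 1) : K) * (eulerEGF p x * twoTanhHalf K ^ k)
        + C (4 * x - 2 * p) * (eulerEGF p x * twoTanhHalf K ^ (k + 1))
        - C (k + 1 + p : K) * (eulerEGF p x * twoTanhHalf K ^ (k + 2)) := by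
  rw [Derivation.leibniz, Derivation.leibniz_pow, Nat.add_sub_cancel]
  simp only [smul_eq_mul, nsmul_eq_mul, map_mul, map_add, map_sub, map_ofNat, map_natCast, map_one]
  push_cast
  have hG := four_mul_derivative_eulerEGF p x
  simp only [map_mul, map_sub, map_ofNat, map_natCast] at hG
  linear_combination
    eulerEGF p x * (k + 1) * twoTanhHalf K ^ k * four_mul_derivative_twoTanhHalf (K := K)
      + twoTanhHalf K ^ (k + 1) * hG

noncomputable def eulerMotzkinArray (p : ℕ) (x : K) (n k : ℕ) : K :=
  n ! / k ! * coeff n (eulerEGF p x * twoTanhHalf K ^ k)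

theorem eulerMotzkinArray_zero_zero (p : ℕ) (x : K) : eulerMotzkinArray p x 0 0 = 1 := by
  have hinv : constantCoeff (exp K + 1)⁻¹ = 2⁻¹ := by
    simp [constantCoeff_exp, one_add_one_eq_two]
  have hrescale : constantCoeff (rescale x (exp K)) = 1 := by
    simp [← coeff_zero_eq_constantCoeff_apply, coeff_rescale, coeff_exp]
  simp [eulerMotzkinArray, eulerEGF, hinv, hrescale, map_ofNat]

theorem eulerMotzkinArray_eq_zero_of_lt (p : ℕ) (x : K) {n k : ℕ} (h : n < k) :
    eulerMotzkinArray p x n k = 0 := by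
  have hT : X ∣ twoTanhHalf K := by
    simp [X_dvd_iff, twoTanhHalf, constantCoeff_exp]
  have hdvd : X ^ k ∣ eulerEGF p x * twoTanhHalf K ^ k := (pow_dvd_pow_of_dvd hT k).mul_left _
  simp [eulerMotzkinArray, X_pow_dvd_iff.mp hdvd n h]

theorem eulerMotzkinArray_succ_zero (p : ℕ) (x : K) (n : ℕ) :
    eulerMotzkinArray p x (n + 1) 0 =
      (x - p / 2) * eulerMotzkinArray p x n 0 - p / 4 * eulerMotzkinArray p x n 1 := by
  have h := congrArg (coeff n) (four_mul_derivative_eulerEGF p x)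
  rw [map_sub, coeff_C_mul, coeff_C_mul, coeff_C_mul, mul_comm] at h
  rw [eulerMotzkinArray, pow_zero, mul_one, div_mul_eq_mul_div, factorial_mul_coeff_succ,
    eq_div_of_mul_eq (by norm_num) h]
  simp only [eulerMotzkinArray, Nat.factorial_zero, Nat.factorial_one, pow_zero, pow_one, mul_one]
  push_cast
  field_simp
  ring

theorem eulerMotzkinArray_succ_succ (p : ℕ) (x : K) (n k : ℕ) :
    eulerMotzkinArray p x (n + 1) (k + 1) = eulerMotzkinArray p x n k
      + (x - p / 2) * eulerMotzkinArray p x n (k + 1)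
      + -((k + 2 : ℕ) * ((k + 2 : ℕ) + p - 1) / 4) * eulerMotzkinArray p x n (k + 2) := by
  have h := congrArg (coeff n) (four_mul_derivative_eulerEGF_mul_twoTanhHalf_pow p k x)
  rw [map_sub, map_add, coeff_C_mul, coeff_C_mul, coeff_C_mul, coeff_C_mul, mul_comm] at h
  rw [eulerMotzkinArray, div_mul_eq_mul_div, factorial_mul_coeff_succ,
    eq_div_of_mul_eq (by norm_num) h]
  simp only [eulerMotzkinArray, Nat.factorial_succ]
  push_cast [add_assoc, one_add_one_eq_two]
  have hk : (k : K) + 2 ≠ 0 := by exact_mod_cast (k + 1).succ_ne_zero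
  field_simp
  ring

theorem isMotzkinArray_eulerMotzkinArray (p : ℕ) (x : K) :
    IsMotzkinArray (fun _ => x - p / 2) (fun k => -(k * (k + p - 1) / 4))
      (eulerMotzkinArray p x) where
  zero_zero := eulerMotzkinArray_zero_zero p x
  eq_zero_of_lt _ _ := eulerMotzkinArray_eq_zero_of_lt p x
  succ_zero n := by rw [eulerMotzkinArray_succ_zero]; push_cast; ring
  succ_succ := eulerMotzkinArray_succ_succ p x

def HasSumOnBall (f : ℂ⟦X⟧) (F : ℂ → ℂ) (r : ℝ≥0) : Prop :=
  ∀ z : ℂ, ‖z‖ < r → HasSum (fun n => coeff n f * z ^ n) (F z)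

theorem hasSumOnBall_C (a : ℂ) (r : ℝ≥0) : HasSumOnBall (C a) (fun _ => a) r := fun z _ => by
  convert hasSum_ite_eq 0 a using 2 with n
  split_ifs with hn <;> simp [coeff_C, hn]

namespace HasSumOnBall

variable {f g : ℂ⟦X⟧} {F G : ℂ → ℂ} {r : ℝ≥0}

theorem le_radius (h : HasSumOnBall f F r) :
    (r : ℝ≥0∞) ≤ (ofScalars ℂ fun n => coeff n f).radius := by
  refine ENNReal.le_of_forall_nnreal_lt fun s hs => ?_
  have hs' : ‖((s : ℝ) : ℂ)‖ < r := by simpa using hs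
  refine le_radius_of_tendsto _ (l := 0) ?_
  simpa [ofScalars_norm] using (h _ hs').summable.tendsto_atTop_zero.norm

theorem summable_norm (h : HasSumOnBall f F r) {z : ℂ} (hz : ‖z‖ < r) :
    Summable fun n => ‖coeff n f * z ^ n‖ := by
  have hlt : (‖z‖₊ : ℝ≥0∞) < (ofScalars ℂ fun n => coeff n f).radius :=
    lt_of_lt_of_le (by exact_mod_cast hz) h.le_radius
  simpa [ofScalars_norm] using summable_norm_mul_pow _ hlt

theorem hasFPowerSeriesOnBall (h : HasSumOnBall f F r) (hr : 0 < r) :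
    HasFPowerSeriesOnBall F (ofScalars ℂ fun n => coeff n f) 0 r where
  r_le := h.le_radius
  r_pos := by exact_mod_cast hr
  hasSum {z} hz := by
    simpa [ofScalars_apply_eq, mul_comm] using h z (by simpa using hz)

theorem unique (hf : HasSumOnBall f F r) (hg : HasSumOnBall g G r) (hr : 0 < r)
    (hFG : ∀ z : ℂ, ‖z‖ < r → F z = G z) : f = g := by
  have hg' : HasSumOnBall g F r := fun z hz => hFG z hz ▸ hg z hz
  have h := (hf.hasFPowerSeriesOnBall hr).hasFPowerSeriesAt.eq_formalMultilinearSeries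
    (hg'.hasFPowerSeriesOnBall hr).hasFPowerSeriesAt
  ext n
  exact congrFun (ofScalars_series_injective ℂ ℂ h) n

theorem add (hf : HasSumOnBall f F r) (hg : HasSumOnBall g G r) :
    HasSumOnBall (f + g) (F + G) r := fun z hz => by
  simpa [add_mul] using (hf z hz).add (hg z hz)

theorem mul (hf : HasSumOnBall f F r) (hg : HasSumOnBall g G r) :
    HasSumOnBall (f * g) (F * G) r := fun z hz => by
  have hfn := hf.summable_norm hz
  have hgn := hg.summable_norm hz
  have hsum := (summable_norm_sum_mul_antidiagonal_of_summable_norm hfn hgn).of_norm.hasSum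
  rw [← tsum_mul_tsum_eq_tsum_sum_antidiagonal_of_summable_norm hfn hgn, (hf z hz).tsum_eq,
    (hg z hz).tsum_eq] at hsum
  refine hsum.congr_fun fun n => ?_
  rw [coeff_mul, Finset.sum_mul]
  refine Finset.sum_congr rfl fun ij hij => ?_
  rw [← Finset.HasAntidiagonal.mem_antidiagonal.mp hij, pow_add]
  ring

theorem pow (h : HasSumOnBall f F r) (p : ℕ) : HasSumOnBall (f ^ p) (F ^ p) r := by
  induction p with
  | zero =>
    rw [pow_zero, pow_zero, ← map_one C]
    exact hasSumOnBall_C 1 r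
  | succ p ih => simpa [pow_succ] using ih.mul h

end HasSumOnBall

theorem hasSumOnBall_rescale_exp (a : ℂ) (r : ℝ≥0) :
    HasSumOnBall (rescale a (exp ℂ)) (fun z => Complex.exp (a * z)) r := fun z _ => by
  rw [Complex.exp_eq_exp_ℂ]
  refine (NormedSpace.expSeries_div_hasSum_exp (a * z)).congr_fun fun n => ?_
  rw [coeff_rescale, coeff_exp, map_div₀, map_one, map_natCast, mul_pow]
  ring

theorem hasSumOnBall_exp (r : ℝ≥0) : HasSumOnBall (exp ℂ) Complex.exp r := by
  simpa [rescale_one] using hasSumOnBall_rescale_exp 1 r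

theorem coeff_eulerEGF_of_hasSum {p : ℕ} {x : ℝ} {E : ℕ → ℝ}
    (hE : ∀ z : ℂ, ‖z‖ < 1 → HasSum (fun n : ℕ => (E n : ℂ) * z ^ n / (n ! : ℂ))
        ((2 / (Complex.exp z + 1)) ^ p * Complex.exp (x * z))) (n : ℕ) :
    coeff n (eulerEGF p x) = E n / n ! := by
  set f : ℝ⟦X⟧ := mk fun n => E n / (n ! : ℝ)
  have hf : HasSumOnBall (map Complex.ofRealHom f)
      (fun z => (2 / (Complex.exp z + 1)) ^ p * Complex.exp (x * z)) 1 := fun z hz => by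
    refine (hE z (by simpa using hz)).congr_fun fun n => ?_
    simp [f, coeff_map]
    ring
  have hexp : HasSumOnBall (map Complex.ofRealHom ((exp ℝ + 1) ^ p))
      (fun z => (Complex.exp z + 1) ^ p) 1 := by
    rw [map_pow, map_add, map_one, map_exp, ← map_one C]
    exact ((hasSumOnBall_exp 1).add (hasSumOnBall_C 1 1)).pow p
  have hrhs : HasSumOnBall (map Complex.ofRealHom (C (2 ^ p) * rescale x (exp ℝ)))
      (fun z => 2 ^ p * Complex.exp (x * z)) 1 := by
    have hmap : map Complex.ofRealHom (C (2 ^ p) * rescale x (exp ℝ)) =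
        C (2 ^ p) * rescale (x : ℂ) (exp ℂ) := by
      rw [map_mul, map_C, ← rescale_map, map_exp, map_pow, map_ofNat]
      rfl
    rw [hmap]
    exact (hasSumOnBall_C _ 1).mul (hasSumOnBall_rescale_exp _ 1)
  have h := (hf.mul hexp).unique hrhs one_pos fun z hz => by
    have hz1 : Complex.exp z + 1 ≠ 0 :=
      Complex.exp_add_one_ne_zero_of_norm_lt_one (by simpa using hz)
    simp only [Pi.mul_apply, div_pow]
    field_simp
  rw [← map_mul, (map_injective _ Complex.ofReal_injective).eq_iff,
    ← eulerEGF_mul_exp_add_one_pow] at h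
  rw [← mul_right_cancel₀ (pow_ne_zero p exp_add_one_ne_zero) h]
  simp [f]

end PowerSeries

theorem stmt_1_general (p : ℕ) (x : ℝ)
    (E : ℕ → ℝ)
    (hE : ∀ z : ℂ, ‖z‖ < 1 →
      HasSum (fun n : ℕ => (E n : ℂ) * z ^ n / (n.factorial : ℂ))
        ((2 / (Complex.exp z + 1)) ^ p * Complex.exp (x * z)))
    (M : ℕ → ℕ → ℝ)
    (hM00 : M 0 0 = 1)
    (hMhigh : ∀ n k : ℕ, n < k → M n k = 0)
    (hM0 : ∀ n : ℕ, M (n + 1) 0 =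
      (x - (p : ℝ) / 2) * M n 0 + (-((1 : ℝ) * ((1 : ℝ) + (p : ℝ) - 1) / 4)) * M n 1)
    (hMk : ∀ n k : ℕ, M (n + 1) (k + 1) =
      M n k + (x - (p : ℝ) / 2) * M n (k + 1)
        + (-(((k : ℝ) + 2) * (((k : ℝ) + 2) + (p : ℝ) - 1) / 4)) * M n (k + 2)) :
    ∀ n : ℕ, M n 0 = E n := by
  have hM : IsMotzkinArray (fun _ => x - p / 2) (fun k => -(k * (k + p - 1) / 4)) M :=
    ⟨hM00, hMhigh, fun n => by rw [hM0]; push_cast; ring,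
      fun n k => by rw [hMk]; push_cast; ring⟩
  intro n
  rw [hM.unique (PowerSeries.isMotzkinArray_eulerMotzkinArray p x),
    PowerSeries.eulerMotzkinArray, pow_zero, mul_one, PowerSeries.coeff_eulerEGF_of_hasSum hE,
    Nat.factorial_zero, Nat.cast_one, div_one]
  field_simp

/-- The generalized Motzkin numbers `𝔈_{n,k}^(p)` built from
`σ_k = x - p/2` and `τ_k = -k(k+p-1)/4` satisfy `𝔈_{n,0}^(p) = E_n^(p)(x)`,
where `E_n^(p)(x)` are the higher-order Euler polynomials, defined by the EGF
`(2/(e^z+1))^p e^{xz} = Σ E_n^(p)(x) z^n/n!`.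
The Motzkin recurrence `M_{n+1,k} = M_{n,k-1} + σ_k M_{n,k} + τ_{k+1} M_{n,k+1}`
(with `M_{n,k} = 0` for `k < 0` or `k > n`) is encoded with natural-number
indices: the `k = 0` case drops the `M_{n,-1}` term. -/
theorem stmt_1 (p : ℕ) (hp : 1 ≤ p) (x : ℝ)
    (E : ℕ → ℝ)
    (hE : ∀ z : ℂ, ‖z‖ < 1 →
      HasSum (fun n : ℕ => (E n : ℂ) * z ^ n / (n.factorial : ℂ))
        ((2 / (Complex.exp z + 1)) ^ p * Complex.exp (x * z)))
    (M : ℕ → ℕ → ℝ)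
    (hM00 : M 0 0 = 1)
    (hMhigh : ∀ n k : ℕ, n < k → M n k = 0)
    (hM0 : ∀ n : ℕ, M (n + 1) 0 =
      (x - (p : ℝ) / 2) * M n 0 + (-((1 : ℝ) * ((1 : ℝ) + (p : ℝ) - 1) / 4)) * M n 1)
    (hMk : ∀ n k : ℕ, M (n + 1) (k + 1) =
      M n k + (x - (p : ℝ) / 2) * M n (k + 1)
        + (-(((k : ℝ) + 2) * (((k : ℝ) + 2) + (p : ℝ) - 1) / 4)) * M n (k + 2)) :
    ∀ n : ℕ, M n 0 = E n :=
  stmt_1_general p x E hE M hM00 hMhigh hM0 hMk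
end

section
/- Let (s_n)_{n≥0} and (t_n)_{n≥1} be real sequences, and let M_{n,k} be the generalized Motzkin numbers obtained from the choices σ_k = s_k and τ_k = t_k. Let L be a linear functional on real polynomials in y with L(1) = 1, and suppose (P_n)_{n≥0} are monic real polynomials with P_0 = 1, P_1(y) = y − s_0, P_{n+1}(y) = (y − s_n)P_n(y) − t_n P_{n−1}(y) for n ≥ 1, and L(y^r P_n(y)) = 0 for all 0 ≤ r < n. Then for every n ≥ 0, M_{n,0} = L(y^n). -/
open Polynomial

/-!
Write `T k = t 1 ⋯ t k`. The three-term recurrence gives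
`y P_k = P_{k+1} + s_k P_k + t_k P_{k-1}`, so `L(y^{n+1} P_k)` is expressed through
`L(y^n P_{k+1})`, `L(y^n P_k)`, `L(y^n P_{k-1})`. Since `T (k+1) = T k · t (k+1)`, this is
the Motzkin recurrence for `T k · M_{n,k}`, and `L(P_0) = 1`, `L(P_{k+1}) = 0` are its
initial values; hence `L(y^n P_k) = T k · M_{n,k}` by induction on `n`, and `k = 0` is the
theorem.
-/

section OrthogonalPolynomials

variable {R : Type*} [CommRing R] (t : ℕ → R)

/-- The normalisation `L(P_k²) / L(1)` of the `k`-th orthogonal polynomial. -/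
def motzkinWeight (k : ℕ) : R := ∏ i ∈ Finset.range k, t (i + 1)

@[simp]
lemma motzkinWeight_zero : motzkinWeight t 0 = 1 := Finset.prod_range_zero _

lemma motzkinWeight_succ (k : ℕ) :
    motzkinWeight t (k + 1) = motzkinWeight t k * t (k + 1) :=
  Finset.prod_range_succ _ _

variable {s : ℕ → R} {t} {P : ℕ → R[X]}

lemma X_mul_zero_of_orthPoly (hP0 : P 0 = 1) (hP1 : P 1 = X - C (s 0)) :
    X * P 0 = P 1 + C (s 0) * P 0 := by
  rw [hP0, hP1]; ring

lemma X_mul_succ_of_orthPoly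
    (hPrec : ∀ n : ℕ, 1 ≤ n → P (n + 1) = (X - C (s n)) * P n - C (t n) * P (n - 1))
    (k : ℕ) : X * P (k + 1) = P (k + 2) + C (s (k + 1)) * P (k + 1) + C (t (k + 1)) * P k := by
  rw [hPrec (k + 1) (Nat.le_add_left 1 k), Nat.add_sub_cancel]; ring

theorem map_X_pow_mul_orthPoly_eq_motzkinWeight_mul (M : ℕ → ℕ → R)
    (hM00 : M 0 0 = 1)
    (hM0high : ∀ k : ℕ, M 0 (k + 1) = 0)
    (hM0 : ∀ n : ℕ, M (n + 1) 0 = s 0 * M n 0 + t 1 * M n 1)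
    (hMk : ∀ n k : ℕ, M (n + 1) (k + 1) =
      M n k + s (k + 1) * M n (k + 1) + t (k + 2) * M n (k + 2))
    (L : R[X] →ₗ[R] R) (hL1 : L 1 = 1)
    (hP0 : P 0 = 1) (hP1 : P 1 = X - C (s 0))
    (hPrec : ∀ n : ℕ, 1 ≤ n → P (n + 1) = (X - C (s n)) * P n - C (t n) * P (n - 1))
    (horth : ∀ k : ℕ, L (P (k + 1)) = 0) (n k : ℕ) :
    L (X ^ n * P k) = motzkinWeight t k * M n k := by
  have hLC (a : R) (q : R[X]) : L (C a * q) = a * L q := by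
    rw [← smul_eq_C_mul, map_smul, smul_eq_mul]
  induction n generalizing k with
  | zero =>
    cases k with
    | zero => simp [hP0, hL1, hM00]
    | succ k => simp [horth, hM0high]
  | succ n ih =>
    cases k with
    | zero =>
      rw [pow_succ, mul_assoc, X_mul_zero_of_orthPoly hP0 hP1, mul_add, mul_left_comm, map_add,
        hLC, ih, ih, hM0, motzkinWeight_succ]
      simp only [motzkinWeight_zero]; ring
    | succ k =>
      rw [pow_succ, mul_assoc, X_mul_succ_of_orthPoly hPrec, mul_add, mul_add, mul_left_comm,
        mul_left_comm _ (C (t (k + 1))), map_add, map_add, hLC, hLC, ih, ih, ih, hMk,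
        motzkinWeight_succ, motzkinWeight_succ]
      ring

end OrthogonalPolynomials

theorem stmt_8_general (s t : ℕ → ℝ)
    (M : ℕ → ℕ → ℝ)
    (hM00 : M 0 0 = 1)
    (hMhigh : ∀ n k : ℕ, n < k → M n k = 0)
    (hM0 : ∀ n : ℕ, M (n + 1) 0 = s 0 * M n 0 + t 1 * M n 1)
    (hMk : ∀ n k : ℕ, M (n + 1) (k + 1) =
      M n k + s (k + 1) * M n (k + 1) + t (k + 2) * M n (k + 2))
    (L : Polynomial ℝ →ₗ[ℝ] ℝ)
    (hL1 : L 1 = 1)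
    (P : ℕ → Polynomial ℝ)
    (hP0 : P 0 = 1)
    (hP1 : P 1 = X - C (s 0))
    (hPrec : ∀ n : ℕ, 1 ≤ n →
      P (n + 1) = (X - C (s n)) * P n - C (t n) * P (n - 1))
    (horth : ∀ r n : ℕ, r < n → L (X ^ r * P n) = 0) :
    ∀ n : ℕ, M n 0 = L (X ^ n) := by
  intro n
  have horth_zero (k : ℕ) : L (P (k + 1)) = 0 := by simpa using horth 0 (k + 1) k.succ_pos
  have hM0high (k : ℕ) : M 0 (k + 1) = 0 := hMhigh 0 (k + 1) k.succ_pos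
  simpa [hP0] using (map_X_pow_mul_orthPoly_eq_motzkinWeight_mul M hM00 hM0high hM0 hMk L hL1
    hP0 hP1 hPrec horth_zero n 0).symm

/-- general theorem: if `(P_n)` are the monic orthogonal
polynomials of a linear functional `L` with `L(1) = 1`, with three-term
recurrence coefficients `s_n, t_n`, and `M_{n,k}` are the generalized Motzkin
numbers built from `σ_k = s_k` and `τ_k = t_k`, then `M_{n,0} = L(y^n)`
(the moments of `L`).
The Motzkin recurrence `M_{n+1,k} = M_{n,k-1} + σ_k M_{n,k} + τ_{k+1} M_{n,k+1}`
(with `M_{n,k} = 0` for `k < 0` or `k > n`) is encoded with natural-number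
indices: the `k = 0` case drops the `M_{n,-1}` term. -/
theorem stmt_8 (s t : ℕ → ℝ)
    (M : ℕ → ℕ → ℝ)
    (hM00 : M 0 0 = 1)
    (hMhigh : ∀ n k : ℕ, n < k → M n k = 0)
    (hM0 : ∀ n : ℕ, M (n + 1) 0 = s 0 * M n 0 + t 1 * M n 1)
    (hMk : ∀ n k : ℕ, M (n + 1) (k + 1) =
      M n k + s (k + 1) * M n (k + 1) + t (k + 2) * M n (k + 2))
    (L : Polynomial ℝ →ₗ[ℝ] ℝ)
    (hL1 : L 1 = 1)
    (P : ℕ → Polynomial ℝ)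
    (hmonic : ∀ n : ℕ, (P n).Monic ∧ (P n).natDegree = n)
    (hP0 : P 0 = 1)
    (hP1 : P 1 = X - C (s 0))
    (hPrec : ∀ n : ℕ, 1 ≤ n →
      P (n + 1) = (X - C (s n)) * P n - C (t n) * P (n - 1))
    (horth : ∀ r n : ℕ, r < n → L (X ^ r * P n) = 0) :
    ∀ n : ℕ, M n 0 = L (X ^ n) :=
  stmt_8_general s t M hM00 hMhigh hM0 hMk L hL1 P hP0 hP1 hPrec horth
end

section
/- Fix an integer p ≥ 1, a real number x, and an integer m ≥ 1. Let RE_m^(p) be the m×m real tridiagonal matrix whose diagonal entries all equal x − p/2, whose subdiagonal entries all equal 1, and whose superdiagonal entry in row k (1-indexed, i.e. the (k, k+1) entry, for 1 ≤ k ≤ m−1) equals −k(k+p−1)/4. Then for every integer n with 0 ≤ n ≤ m, the (1,1) entry of the matrix power (RE_m^(p))^n equals E_n^(p)(x). -/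
/-!
Put `t(z) = tanh (z/2) = 1 - 2/(e^z + 1)` and `G(z) = (2/(e^z + 1))^p e^{xz}`. Then
`G' = G (x - p/2 - (p/2) t)` and `t' = (1 - t²)/2`, so the functions
`F_k = (-1/2)^k p(p+1)⋯(p+k-1) G t^k` satisfy
`F_k' = F_{k+1} + (x - p/2) F_k - k(k+p-1)/4 F_{k-1}` and `F_k(0) = δ_{k0}`.
Differentiating `n` times at `0`, the numbers `F_k^{(n)}(0)` obey the recurrence of the first row of
the powers of the infinite tridiagonal matrix with the entries of `RE`. That row of the `n`-th power
vanishes beyond column `n`, so for `n ≤ m` it is not affected by truncating the matrix to `m × m`.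
Finally `F_0 = G`, whose `n`-th derivative at `0` is `E_n^(p)(x)`.
-/

open Complex Filter Topology Finset
open scoped NNReal

namespace Tridiagonal

variable {R : Type*} [Semiring R] (d : R) (u : ℕ → R)

def entry (i j : ℕ) : R :=
  if i = j then d else if i = j + 1 then 1 else if j = i + 1 then u i else 0

/-- The entry `(0, k)` of the `n`-th power of the infinite matrix `(entry d u i j)_{i,j ∈ ℕ}`. -/
def powRow : ℕ → ℕ → R
  | 0, k => if k = 0 then 1 else 0
  | n + 1, 0 => powRow n 1 + powRow n 0 * d
  | n + 1, k + 1 => powRow n (k + 2) + powRow n (k + 1) * d + powRow n k * u k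

@[simp] theorem entry_self (i : ℕ) : entry d u i i = d := if_pos rfl

@[simp] theorem entry_succ_self (j : ℕ) : entry d u (j + 1) j = 1 := by
  unfold entry; split_ifs <;> first | rfl | omega

@[simp] theorem entry_self_succ (i : ℕ) : entry d u i (i + 1) = u i := by
  unfold entry; split_ifs <;> first | rfl | omega

theorem entry_eq_zero {i j : ℕ} (h : i + 1 < j ∨ j + 1 < i) : entry d u i j = 0 := by
  unfold entry; split_ifs <;> first | rfl | omega

theorem powRow_eq_zero_of_lt : ∀ {n k : ℕ}, n < k → powRow d u n k = 0
  | 0, k + 1, _ => rfl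
  | n + 1, k + 1, h => by
    simp [powRow, powRow_eq_zero_of_lt (by omega : n < k + 2),
      powRow_eq_zero_of_lt (by omega : n < k + 1), powRow_eq_zero_of_lt (by omega : n < k)]

theorem powRow_succ_eq_sum (n k : ℕ) :
    powRow d u (n + 1) k = ∑ i ∈ range (k + 2), powRow d u n i * entry d u i k := by
  rcases k with _ | k
  · simp only [powRow, sum_range_succ, range_zero, sum_empty, entry_self, entry_succ_self, mul_one,
      zero_add]
    abel
  · have hlow : ∑ i ∈ range k, powRow d u n i * entry d u i (k + 1) = 0 :=
      sum_eq_zero fun i hi =>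
        by rw [entry_eq_zero d u (.inl (Nat.succ_lt_succ (mem_range.mp hi))), mul_zero]
    simp only [powRow, sum_range_succ, hlow, entry_self, entry_succ_self, entry_self_succ, mul_one,
      zero_add]
    abel

theorem map_powRow {S : Type*} [Semiring S] (f : R →+* S) (n k : ℕ) :
    f (powRow d u n k) = powRow (f d) (f ∘ u) n k := by
  induction n generalizing k with
  | zero => simp [powRow, apply_ite f]
  | succ n ih => rcases k with _ | k <;> simp [powRow, ih]

theorem pow_apply_eq_powRow {m : ℕ} (hm : 0 < m) {M : Matrix (Fin m) (Fin m) R}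
    (hM : ∀ i j : Fin m, M i j = entry d u i j) :
    ∀ n ≤ m, ∀ k (hk : k < m), (M ^ n) ⟨0, hm⟩ ⟨k, hk⟩ = powRow d u n k := by
  intro n
  induction n with
  | zero =>
    intro _ k hk
    simp [powRow, Matrix.one_apply, Fin.ext_iff, eq_comm]
  | succ n ih =>
    intro hn k hk
    have hlast : powRow d u n m = 0 := powRow_eq_zero_of_lt d u (by omega)
    calc (M ^ (n + 1)) ⟨0, hm⟩ ⟨k, hk⟩
        = ∑ i ∈ range m, powRow d u n i * entry d u i k := by
          rw [pow_succ, Matrix.mul_apply, ← Fin.sum_univ_eq_sum_range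
            (fun i => powRow d u n i * entry d u i k)]
          exact sum_congr rfl fun i _ => by rw [ih (by omega) i i.isLt, hM]
      _ = ∑ i ∈ range (m + 1), powRow d u n i * entry d u i k := by
          rw [sum_range_succ, hlast, zero_mul, add_zero]
      _ = powRow d u (n + 1) k := by
          rw [powRow_succ_eq_sum]
          refine (sum_subset (range_subset_range.mpr (by omega)) fun i hi hi' => ?_).symm
          simp only [mem_range, not_lt] at hi hi'
          rw [entry_eq_zero d u (by omega), mul_zero]

end Tridiagonal

theorem iteratedDeriv_succ_eq_of_eventually_hasDerivAt {𝕜 F : Type*} [NontriviallyNormedField 𝕜]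
    [NormedAddCommGroup F] [NormedSpace 𝕜 F] {f f' : 𝕜 → F} {x : 𝕜}
    (h : ∀ᶠ y in 𝓝 x, HasDerivAt f (f' y) y) (n : ℕ) :
    iteratedDeriv (n + 1) f x = iteratedDeriv n f' x := by
  rw [iteratedDeriv_succ']
  exact (EventuallyEq.iteratedDeriv (h.mono fun y hy => hy.deriv) n).eq_of_nhds

theorem iteratedDeriv_eq_of_hasSum {f : ℂ → ℂ} {c : ℕ → ℂ} {r : ℝ≥0} (hr : 0 < r)
    (h : ∀ z : ℂ, ‖z‖ < r → HasSum (fun n => c n * z ^ n / n.factorial) (f z)) (n : ℕ) :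
    iteratedDeriv n f 0 = c n := by
  set P := FormalMultilinearSeries.ofScalars ℂ fun n => c n / n.factorial
  have hP (z : ℂ) (n : ℕ) : P n (fun _ => z) = c n * z ^ n / n.factorial := by
    simp only [P, FormalMultilinearSeries.apply_eq_prod_smul_coeff, prod_const, card_univ,
      Fintype.card_fin, FormalMultilinearSeries.coeff_ofScalars, smul_eq_mul]
    ring
  obtain ⟨s, hs0, hsr⟩ := exists_between hr
  have hf : HasFPowerSeriesOnBall f P 0 s := by
    refine ⟨P.le_radius_of_tendsto (l := 0) ?_, by simpa using hs0, fun {z} hz => ?_⟩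
    · simpa [P, FormalMultilinearSeries.coeff_ofScalars, div_mul_eq_mul_div] using
        (h s (by simpa using hsr)).summable.tendsto_atTop_zero.norm
    · have hzs : ‖z‖ < s := by simpa using hz
      simpa [hP] using h z (hzs.trans (by exact_mod_cast hsr))
  rw [iteratedDeriv_eq_iteratedFDeriv, ← hf.factorial_smul 1 n, hP]
  simp only [nsmul_eq_mul, one_pow, mul_one]
  exact mul_div_cancel₀ _ (Nat.cast_ne_zero.mpr n.factorial_ne_zero)

noncomputable def eulerGF (p : ℕ) (x z : ℂ) : ℂ := (2 / (exp z + 1)) ^ p * exp (x * z)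

noncomputable def tanhHalf (z : ℂ) : ℂ := 1 - 2 / (exp z + 1)

noncomputable def eulerGFTanh (p : ℕ) (x : ℂ) (k : ℕ) (z : ℂ) : ℂ :=
  (-1 / 2) ^ k * p.ascFactorial k * eulerGF p x z * tanhHalf z ^ k

theorem eulerGFTanh_zero (p : ℕ) (x : ℂ) : eulerGFTanh p x 0 = eulerGF p x := by
  ext z; simp [eulerGFTanh]

section Derivatives

variable {z : ℂ} (hz : exp z + 1 ≠ 0)
include hz

theorem hasDerivAt_two_div_exp_add_one :
    HasDerivAt (fun w => 2 / (exp w + 1)) ((2 / (exp z + 1)) ^ 2 / 2 - 2 / (exp z + 1)) z :=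
  ((hasDerivAt_const z 2).div ((hasDerivAt_exp z).add_const 1) hz).congr_deriv <| by
    field_simp
    ring

theorem hasDerivAt_tanhHalf : HasDerivAt tanhHalf ((1 - tanhHalf z ^ 2) / 2) z :=
  ((hasDerivAt_two_div_exp_add_one hz).const_sub 1).congr_deriv <| by
    simp only [tanhHalf]
    ring

theorem hasDerivAt_eulerGF (p : ℕ) (x : ℂ) :
    HasDerivAt (eulerGF p x) (eulerGF p x z * (x - p / 2 - p / 2 * tanhHalf z)) z := by
  have hexp : HasDerivAt (fun w => exp (x * w)) (exp (x * z) * x) z := by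
    simpa using ((hasDerivAt_id z).const_mul x).cexp
  refine (((hasDerivAt_two_div_exp_add_one hz).fun_pow p).mul hexp).congr_deriv ?_
  simp only [eulerGF, tanhHalf]
  rcases p with _ | p
  · simp
  · simp only [Nat.add_sub_cancel]
    push_cast
    ring

theorem hasDerivAt_eulerGFTanh_zero (p : ℕ) (x : ℂ) :
    HasDerivAt (eulerGFTanh p x 0)
      (eulerGFTanh p x 1 z + eulerGFTanh p x 0 z * (x - p / 2)) z := by
  rw [eulerGFTanh_zero]
  refine (hasDerivAt_eulerGF hz p x).congr_deriv ?_
  simp only [eulerGFTanh, pow_one, Nat.ascFactorial_succ, Nat.ascFactorial_zero]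
  push_cast
  ring

theorem hasDerivAt_eulerGFTanh_succ (p : ℕ) (x : ℂ) (k : ℕ) :
    HasDerivAt (eulerGFTanh p x (k + 1))
      (eulerGFTanh p x (k + 2) z + eulerGFTanh p x (k + 1) z * (x - p / 2)
        + eulerGFTanh p x k z * (-((k + 1) * (k + p)) / 4)) z := by
  refine (((hasDerivAt_eulerGF hz p x).const_mul _).mul
    ((hasDerivAt_tanhHalf hz).fun_pow (k + 1))).congr_deriv ?_
  simp only [eulerGFTanh, Nat.ascFactorial_succ, Nat.add_sub_cancel]
  push_cast
  ring

end Derivatives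

theorem eventually_exp_add_one_ne_zero : ∀ᶠ z in 𝓝 (0 : ℂ), exp z + 1 ≠ 0 :=
  (continuous_exp.add continuous_const).continuousAt.eventually_ne (by norm_num)

theorem analyticAt_eulerGFTanh (p : ℕ) (x : ℂ) (k : ℕ) : AnalyticAt ℂ (eulerGFTanh p x k) 0 :=
  analyticAt_iff_eventually_differentiableAt.mpr <| eventually_exp_add_one_ne_zero.mono
    fun z hz => by
      rcases k with _ | k
      · exact (hasDerivAt_eulerGFTanh_zero hz p x).differentiableAt
      · exact (hasDerivAt_eulerGFTanh_succ hz p x k).differentiableAt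

theorem iteratedDeriv_eulerGFTanh (p : ℕ) (x : ℂ) (n k : ℕ) :
    iteratedDeriv n (eulerGFTanh p x k) 0 =
      Tridiagonal.powRow (x - p / 2) (fun k => -((k + 1) * (k + p)) / 4) n k := by
  have hC (N j : ℕ) : ContDiffAt ℂ N (eulerGFTanh p x j) 0 :=
    (analyticAt_eulerGFTanh p x j).contDiffAt
  induction n generalizing k with
  | zero =>
    rcases k with _ | k <;> norm_num [eulerGFTanh, eulerGF, tanhHalf, Tridiagonal.powRow]
  | succ n ih =>
    rcases k with _ | k
    · rw [iteratedDeriv_succ_eq_of_eventually_hasDerivAt (eventually_exp_add_one_ne_zero.mono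
        fun z hz => hasDerivAt_eulerGFTanh_zero hz p x),
        iteratedDeriv_fun_add (hC _ 1) ((hC _ 0).mul contDiffAt_const),
        iteratedDeriv_mul_const_field, ih, ih]
      rfl
    · rw [iteratedDeriv_succ_eq_of_eventually_hasDerivAt (eventually_exp_add_one_ne_zero.mono
        fun z hz => hasDerivAt_eulerGFTanh_succ hz p x k),
        iteratedDeriv_fun_add ((hC _ _).add ((hC _ _).mul contDiffAt_const))
          ((hC _ _).mul contDiffAt_const),
        iteratedDeriv_fun_add (hC _ _) ((hC _ _).mul contDiffAt_const),
        iteratedDeriv_mul_const_field, iteratedDeriv_mul_const_field, ih, ih, ih]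
      rfl

theorem stmt_9_general (p : ℕ) (x : ℝ) (m : ℕ) (hm : 1 ≤ m)
    (E : ℕ → ℝ)
    (hE : ∀ z : ℂ, ‖z‖ < 1 →
      HasSum (fun n : ℕ => (E n : ℂ) * z ^ n / (n.factorial : ℂ))
        ((2 / (Complex.exp z + 1)) ^ p * Complex.exp (x * z)))
    (RE : Matrix (Fin m) (Fin m) ℝ)
    (hRE : ∀ i j : Fin m, RE i j =
      if (i : ℕ) = (j : ℕ) then x - (p : ℝ) / 2
      else if (i : ℕ) = (j : ℕ) + 1 then 1
      else if (j : ℕ) = (i : ℕ) + 1 then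
        -(((i : ℕ) + 1 : ℝ) * (((i : ℕ) + 1 : ℝ) + (p : ℝ) - 1)) / 4
      else 0) :
    ∀ n : ℕ, n ≤ m → (RE ^ n) ⟨0, hm⟩ ⟨0, hm⟩ = E n := by
  intro n hn
  have hrow := Tridiagonal.pow_apply_eq_powRow (x - p / 2)
    (fun k : ℕ => -(((k : ℝ) + 1) * (((k : ℝ) + 1) + p - 1)) / 4) hm hRE n hn 0 hm
  have hgf : iteratedDeriv n (eulerGF p x) 0 = E n :=
    iteratedDeriv_eq_of_hasSum (f := eulerGF p x) one_pos hE n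
  rw [← eulerGFTanh_zero, iteratedDeriv_eulerGFTanh] at hgf
  rw [hrow, ← Complex.ofReal_inj, ← hgf, ← Complex.ofRealHom_eq_coe, Tridiagonal.map_powRow]
  congr 1
  · simp
  · ext k
    simp only [Function.comp_apply, Complex.ofRealHom_eq_coe]
    push_cast
    ring

/-- matrix representation for the higher-order Euler polynomials.
`RE_m^(p)` is the `m × m` tridiagonal matrix with diagonal entries `x - p/2`,
subdiagonal entries `1`, and superdiagonal entry `-k(k+p-1)/4` in (1-indexed)
row `k`. For `0 ≤ n ≤ m` the `(1,1)` entry of `(RE_m^(p))^n` is `E_n^(p)(x)`,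
where `E_n^(p)(x)` is given by the EGF `(2/(e^z+1))^p e^{xz} = Σ E_n^(p)(x) z^n/n!`. -/
theorem stmt_9 (p : ℕ) (hp : 1 ≤ p) (x : ℝ) (m : ℕ) (hm : 1 ≤ m)
    (E : ℕ → ℝ)
    (hE : ∀ z : ℂ, ‖z‖ < 1 →
      HasSum (fun n : ℕ => (E n : ℂ) * z ^ n / (n.factorial : ℂ))
        ((2 / (Complex.exp z + 1)) ^ p * Complex.exp (x * z)))
    (RE : Matrix (Fin m) (Fin m) ℝ)
    (hRE : ∀ i j : Fin m, RE i j =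
      if (i : ℕ) = (j : ℕ) then x - (p : ℝ) / 2
      else if (i : ℕ) = (j : ℕ) + 1 then 1
      else if (j : ℕ) = (i : ℕ) + 1 then
        -(((i : ℕ) + 1 : ℝ) * (((i : ℕ) + 1 : ℝ) + (p : ℝ) - 1)) / 4
      else 0) :
    ∀ n : ℕ, n ≤ m → (RE ^ n) ⟨0, hm⟩ ⟨0, hm⟩ = E n :=
  stmt_9_general p x m hm E hE RE hRE
end

section
/- Fix a real number x and an integer m ≥ 1. Let RB_m be the m×m real tridiagonal matrix whose diagonal entries all equal x − 1/2, whose subdiagonal entries all equal 1, and whose superdiagonal entry in row k (1-indexed, i.e. the (k, k+1) entry, for 1 ≤ k ≤ m−1) equals −k⁴/(4(2k+1)(2k−1)). Then for every integer n with 0 ≤ n ≤ m, the (1,1) entry of the matrix power (RB_m)^n equals B_n(x). -/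
/-!
Let `L` be the linear functional on `K[X]` with `L (Xⁿ) = Bₙ(x)`. The identity
`Bₙ(X + 1) = Bₙ + n X^(n-1)` gives `L (p(X + 1)) = L p + p'(x)`; applied to `(X - x)² f`, whose
derivative vanishes at `x`, it shows that `L` kills the second-order difference operator `diffOp`.
The monic polynomials `P₀ = 1`, `P_{j+1} = (X - x + 1/2) Pⱼ + μⱼ P_{j-1}` with
`μⱼ = j⁴ / (4 (2j+1) (2j-1))` are eigenfunctions of `diffOp` with eigenvalues `j (j + 1)` (proved
by induction together with a formula for its commutator `commOp` with `X - x + 1/2`), so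
`L Pⱼ = 0` for `j ≥ 1`. Multiplication by `X` acts on the `Pⱼ` through the tridiagonal matrix
`RB`, and expanding `L (Xⁿ) = L (Xⁿ P₀)` along this action yields the `(0, 0)` entry of `RBⁿ`.
-/

open Polynomial Finset

section Hessenberg

variable {R A : Type*} [CommRing R] [Ring A] [Algebra R A]

/-- The truncation to `Fin m` is invisible while `n + j ≤ m`: the recurrence for `t * P j` only
involves `P i` with `i ≤ j + 1`, and the one index `i = m` that can occur has `L (P m) = 0`. -/
theorem map_pow_mul_eq_pow_apply_of_hessenberg {m : ℕ} (hm : 0 < m) (L : A →ₗ[R] R) (t : A)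
    (P : ℕ → A) (H : ℕ → ℕ → R) (hH : ∀ i j, j + 1 < i → H i j = 0)
    (hP : ∀ j, t * P j = ∑ i ∈ range (j + 2), H i j • P i)
    (hL : ∀ k, L (P k) = if k = 0 then 1 else 0) (n j : ℕ) (hnj : n + j ≤ m) :
    L (t ^ n * P j) = if h : j < m then
      ((Matrix.of fun i j : Fin m => H i j) ^ n) ⟨0, hm⟩ ⟨j, h⟩ else 0 := by
  set M : Matrix (Fin m) (Fin m) R := Matrix.of fun i j => H i j
  induction n generalizing j with
  | zero =>
    rw [pow_zero, one_mul, hL]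
    split_ifs <;> simp_all [Matrix.one_apply, Fin.ext_iff]
    omega
  | succ n ih =>
    set e : ℕ → R := fun i => if h : i < m then (M ^ n) ⟨0, hm⟩ ⟨i, h⟩ else 0
    have hj : j < m := by omega
    calc L (t ^ (n + 1) * P j) = ∑ i ∈ range (j + 2), e i * H i j := by
          rw [pow_succ, mul_assoc, hP, mul_sum, map_sum]
          refine sum_congr rfl fun i hi => ?_
          rw [mul_smul_comm, map_smul, ih i (by simp at hi; omega), smul_eq_mul, mul_comm]
      _ = ∑ i ∈ range (m + 1), e i * H i j := by
          refine sum_subset (range_subset_range.2 (by omega)) fun i _ hi => ?_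
          rw [hH i j (by simp at hi; omega), mul_zero]
      _ = ∑ i : Fin m, (M ^ n) ⟨0, hm⟩ i * M i ⟨j, hj⟩ := by
          rw [sum_range_succ, ← Fin.sum_univ_eq_sum_range]
          simp [e, M]
      _ = _ := by rw [dif_pos hj, pow_succ, Matrix.mul_apply]

def jacobiEntry (b c : ℕ → R) (i j : ℕ) : R :=
  if i = j then b i else if i = j + 1 then 1 else if j = i + 1 then c i else 0

def jacobiMatrix (m : ℕ) (b c : ℕ → R) : Matrix (Fin m) (Fin m) R :=
  Matrix.of fun i j => jacobiEntry b c i j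

theorem jacobiEntry_eq_zero {b c : ℕ → R} {i j : ℕ} (h : j + 1 < i ∨ i + 1 < j) :
    jacobiEntry b c i j = 0 := by
  rw [jacobiEntry, if_neg (by omega), if_neg (by omega), if_neg (by omega)]

@[simp]
theorem jacobiEntry_self (b c : ℕ → R) (i : ℕ) : jacobiEntry b c i i = b i := if_pos rfl

@[simp]
theorem jacobiEntry_succ_self (b c : ℕ → R) (j : ℕ) : jacobiEntry b c (j + 1) j = 1 := by
  rw [jacobiEntry, if_neg (by omega), if_pos rfl]

@[simp]
theorem jacobiEntry_self_succ (b c : ℕ → R) (i : ℕ) : jacobiEntry b c i (i + 1) = c i := by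
  rw [jacobiEntry, if_neg (by omega), if_neg (by omega), if_pos rfl]

theorem map_pow_mul_eq_jacobiMatrix_pow_apply {m : ℕ} (hm : 0 < m) (L : A →ₗ[R] R) (t : A)
    (P : ℕ → A) (b c : ℕ → R) (hP₀ : t * P 0 = P 1 + b 0 • P 0)
    (hP : ∀ j, t * P (j + 1) = P (j + 2) + b (j + 1) • P (j + 1) + c j • P j)
    (hL : ∀ k, L (P k) = if k = 0 then 1 else 0) {n : ℕ} (hn : n ≤ m) :
    L (t ^ n * P 0) = (jacobiMatrix m b c ^ n) ⟨0, hm⟩ ⟨0, hm⟩ := by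
  refine (map_pow_mul_eq_pow_apply_of_hessenberg hm L t P _
    (fun i j h => jacobiEntry_eq_zero (.inl h)) (fun j => ?_) hL n 0 (by omega)).trans (dif_pos hm)
  rcases j with _ | j
  · simp [sum_range_succ, hP₀, add_comm]
  · rw [hP, sum_range_succ, sum_range_succ, sum_range_succ, sum_eq_zero fun i hi => by
      rw [jacobiEntry_eq_zero (by simp at hi; omega), zero_smul]]
    simp only [jacobiEntry_self, jacobiEntry_succ_self, jacobiEntry_self_succ, one_smul]
    abel

end Hessenberg

theorem Polynomial.linearMap_ext_bernoulli {K M : Type*} [Field K] [CharZero K] [AddCommGroup M]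
    [Module K M] {f g : K[X] →ₗ[K] M}
    (h : ∀ k, f ((bernoulli k).map (algebraMap ℚ K)) =
      g ((bernoulli k).map (algebraMap ℚ K))) :
    f = g := by
  refine lhom_ext' fun n => LinearMap.ext_ring ?_
  have hsum : ((n + 1 : ℕ) : K) • monomial n (1 : K) =
      ∑ k ∈ range (n + 1), ((n + 1).choose k : K) • (bernoulli k).map (algebraMap ℚ K) := by
    have := congrArg (Polynomial.map (algebraMap ℚ K)) (sum_bernoulli n)
    rw [Polynomial.map_monomial] at this
    simp only [Polynomial.map_sum, Polynomial.map_smul, map_natCast, map_add, map_one] at this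
    rw [this, smul_monomial, smul_eq_mul, mul_one, Nat.cast_succ, map_add]
  apply smul_right_injective M (Nat.cast_ne_zero.2 n.succ_ne_zero : ((n + 1 : ℕ) : K) ≠ 0)
  simp only [LinearMap.comp_apply, ← map_smul, hsum, map_sum]
  simp only [map_smul, h]

namespace BernoulliJacobi

section CommRing

variable {R : Type*} [CommRing R]

noncomputable def diffOp (x : R) (f : R[X]) : R[X] :=
  (X - C x + 1) ^ 2 * (f.comp (X + 1) - f) + (X - C x) ^ 2 * (f.comp (X - 1) - f)

noncomputable def commOp (x : R) (f : R[X]) : R[X] :=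
  (X - C x + 1) ^ 2 * f.comp (X + 1) - (X - C x) ^ 2 * f.comp (X - 1)

theorem diffOp_add (x : R) (f g : R[X]) : diffOp x (f + g) = diffOp x f + diffOp x g := by
  simp only [diffOp, add_comp]; ring

theorem diffOp_C_mul (x a : R) (f : R[X]) : diffOp x (C a * f) = C a * diffOp x f := by
  simp only [diffOp, mul_comp, C_comp]; ring

theorem commOp_add (x : R) (f g : R[X]) : commOp x (f + g) = commOp x f + commOp x g := by
  simp only [commOp, add_comp]; ring

theorem commOp_C_mul (x a : R) (f : R[X]) : commOp x (C a * f) = C a * commOp x f := by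
  simp only [commOp, mul_comp, C_comp]; ring

theorem diffOp_one (x : R) : diffOp x 1 = 0 := by simp [diffOp]

end CommRing

section Field

variable {K : Type*} [Field K]

noncomputable def centered (x : K) : K[X] := X - C (x - 1 / 2)

theorem centered_eq (x : K) : centered x = X - C x + C (1 / 2) := by
  rw [centered, C_sub]; ring

theorem diffOp_centered_mul (x : K) (f : K[X]) :
    diffOp x (centered x * f) = centered x * diffOp x f + commOp x f := by
  simp only [diffOp, commOp, mul_comp, centered_eq, add_comp, sub_comp, X_comp, C_comp]
  ring

noncomputable def recCoeff (k : ℕ) : K := (k : K) ^ 4 / (4 * (2 * k + 1) * (2 * k - 1))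

noncomputable def orthoPoly (x : K) : ℕ → K[X]
  | 0 => 1
  | 1 => centered x
  | j + 2 => centered x * orthoPoly x (j + 1) + C (recCoeff (j + 1)) * orthoPoly x j

-- At `j = 0` the truncated index `0 - 1 = 0` is harmless because `recCoeff 0 = 0`.
theorem orthoPoly_succ (x : K) (j : ℕ) :
    orthoPoly x (j + 1) = centered x * orthoPoly x j + C (recCoeff j) * orthoPoly x (j - 1) := by
  rcases j with _ | j
  · simp [orthoPoly, recCoeff]
  · rfl

theorem X_mul_orthoPoly_zero (x : K) :
    X * orthoPoly x 0 = orthoPoly x 1 + (x - 1 / 2) • orthoPoly x 0 := by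
  simp [orthoPoly, centered, smul_eq_C_mul]

theorem X_mul_orthoPoly_add_one (x : K) (j : ℕ) :
    X * orthoPoly x (j + 1) = orthoPoly x (j + 2) + (x - 1 / 2) • orthoPoly x (j + 1) +
      (-recCoeff (j + 1) : K) • orthoPoly x j := by
  simp only [orthoPoly, centered, smul_eq_C_mul, map_neg, C_sub]
  ring

end Field

variable {K : Type*} [Field K] [CharZero K]

theorem two_mul_C_half : (2 : K[X]) * C (1 / 2 : K) = 1 := by
  rw [← C_ofNat, ← C_mul, mul_one_div_cancel (two_ne_zero : (2 : K) ≠ 0), C_1]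

theorem commOp_one (x : K) : commOp x 1 = 2 * centered x := by
  simp only [commOp, one_comp, centered_eq]
  linear_combination -two_mul_C_half (K := K)

theorem commOp_centered_mul (x : K) (f : K[X]) :
    commOp x (centered x * f) =
      centered x * commOp x f + diffOp x f + (2 * centered x ^ 2 + C (1 / 2)) * f := by
  simp only [diffOp, commOp, mul_comp, centered_eq, add_comp, sub_comp, X_comp, C_comp]
  linear_combination -(2 * (X - C x) + 1 + C (1 / 2 : K)) * f * two_mul_C_half (K := K)

theorem two_mul_natCast_sub_one_ne_zero (k : ℕ) : (2 * k - 1 : K) ≠ 0 := by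
  intro h
  have : ((2 * k : ℕ) : K) = ((1 : ℕ) : K) := by push_cast; linear_combination h
  exact absurd (Nat.cast_injective this) (by omega)

theorem recCoeff_add_two (j : ℕ) :
    2 * (2 * (j : K) + 5) * recCoeff (j + 2) =
      2 * (2 * j + 1) * recCoeff (j + 1) + (j + 1) * (j + 2) + 1 / 2 := by
  have h₁ := two_mul_natCast_sub_one_ne_zero (K := K) (j + 1)
  have h₂ := two_mul_natCast_sub_one_ne_zero (K := K) (j + 2)
  have h₃ : (2 * ((j + 1 : ℕ) : K) + 1) ≠ 0 := by norm_cast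
  have h₄ : (2 * ((j + 2 : ℕ) : K) + 1) ≠ 0 := by norm_cast
  simp only [recCoeff]
  field_simp
  push_cast
  ring

theorem orthoPoly_eigen (x : K) (j : ℕ) :
    diffOp x (orthoPoly x j) = C ((j : K) * (j + 1)) * orthoPoly x j ∧
      commOp x (orthoPoly x j) = C (2 * ((j : K) + 1)) * (centered x * orthoPoly x j) +
        C (2 * (2 * (j : K) + 1) * recCoeff j) * orthoPoly x (j - 1) := by
  induction j using Nat.twoStepInduction with
  | zero => simp [orthoPoly, diffOp_one, commOp_one, recCoeff, C_ofNat]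
  | one =>
    have h : 2 * (2 * 1 + 1) * recCoeff 1 = (1 / 2 : K) := by norm_num [recCoeff]
    rw [show orthoPoly x 1 = centered x * 1 by simp [orthoPoly], diffOp_centered_mul,
      commOp_centered_mul, diffOp_one, commOp_one, Nat.cast_one, h, Nat.sub_self, orthoPoly]
    constructor <;> simp only [map_mul, map_add, map_one, C_ofNat] <;> ring
  | more j ih₀ ih₁ =>
    obtain ⟨hL₀, hM₀⟩ := ih₀
    obtain ⟨hL₁, hM₁⟩ := ih₁
    have hrec := orthoPoly_succ x j
    have hμ := congrArg C (recCoeff_add_two (K := K) j)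
    simp only [Nat.add_sub_cancel] at hM₁
    simp only [orthoPoly, diffOp_add, diffOp_C_mul, diffOp_centered_mul, commOp_add,
      commOp_C_mul, commOp_centered_mul, hL₀, hL₁, hM₀, hM₁]
    push_cast at hμ ⊢
    simp only [map_mul, map_add, map_natCast, map_ofNat, map_one] at hμ ⊢
    constructor
    · ring
    -- The leftover multiple of `centered x * orthoPoly x j` is absorbed by the recurrence for
    -- `orthoPoly x (j + 1)`; the remaining scalar identity is `recCoeff_add_two`.
    · linear_combination
        (-(4 * (j : K[X]) + 2) * C (recCoeff (j + 1))) * hrec - orthoPoly x (j + 1) * hμ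

noncomputable def moment (x : K) : K[X] →ₗ[K] K :=
  lsum fun n =>
    LinearMap.toSpanSingleton K K (((Polynomial.bernoulli n).map (algebraMap ℚ K)).eval x)

theorem moment_X_pow (x : K) (n : ℕ) :
    moment x (X ^ n) = ((Polynomial.bernoulli n).map (algebraMap ℚ K)).eval x := by
  simp [moment, ← monomial_one_right_eq_X_pow, sum_monomial_index]

theorem moment_comp_X_add_one (x : K) (p : K[X]) :
    moment x (p.comp (X + 1)) = moment x p + (derivative p).eval x := by
  suffices (moment x).comp (aeval (X + 1 : K[X])).toLinearMap =
      moment x + (leval x).comp derivative from by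
    simpa [comp_eq_aeval] using LinearMap.congr_fun this p
  refine linearMap_ext_bernoulli fun k => ?_
  have hshift : ((Polynomial.bernoulli k).map (algebraMap ℚ K)).comp (X + 1) =
      (Polynomial.bernoulli k).map (algebraMap ℚ K) + k • X ^ (k - 1) := by
    simpa [Polynomial.map_comp, add_comm] using
      congrArg (Polynomial.map (algebraMap ℚ K)) (bernoulli_comp_one_add_X k)
  have hder : derivative ((Polynomial.bernoulli k).map (algebraMap ℚ K)) =
      k * (Polynomial.bernoulli (k - 1)).map (algebraMap ℚ K) := by
    simpa [derivative_map] using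
      congrArg (Polynomial.map (algebraMap ℚ K)) (derivative_bernoulli k)
  simp only [LinearMap.comp_apply, AlgHom.toLinearMap_apply, ← comp_eq_aeval, hshift,
    LinearMap.add_apply, leval_apply, hder, map_add, map_nsmul, moment_X_pow, eval_mul,
    eval_natCast]
  rw [nsmul_eq_mul]

theorem moment_sq_mul_comp_X_add_one (x : K) (f : K[X]) :
    moment x ((X - C x + 1) ^ 2 * f.comp (X + 1)) = moment x ((X - C x) ^ 2 * f) := by
  have hcomp : ((X - C x) ^ 2 * f).comp (X + 1) = (X - C x + 1) ^ 2 * f.comp (X + 1) := by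
    simp only [mul_comp, pow_comp, sub_comp, X_comp, C_comp]
    ring
  have hder : (derivative ((X - C x) ^ 2 * f)).eval x = 0 := by
    simp [derivative_mul, derivative_pow]
  rw [← hcomp, moment_comp_X_add_one, hder, add_zero]

theorem moment_diffOp (x : K) (f : K[X]) : moment x (diffOp x f) = 0 := by
  have h₁ := moment_sq_mul_comp_X_add_one x f
  have h₂ := moment_sq_mul_comp_X_add_one x (f.comp (X - 1))
  rw [comp_assoc, sub_comp, X_comp, one_comp, add_sub_cancel_right, comp_X] at h₂
  rw [diffOp, map_add, mul_sub, mul_sub, map_sub, map_sub, h₁, h₂]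
  abel

theorem moment_orthoPoly (x : K) (k : ℕ) :
    moment x (orthoPoly x k) = if k = 0 then 1 else 0 := by
  rcases k with _ | k
  · simpa [orthoPoly] using moment_X_pow x 0
  · have h := moment_diffOp x (orthoPoly x (k + 1))
    rw [(orthoPoly_eigen x (k + 1)).1, ← smul_eq_C_mul, map_smul, smul_eq_mul] at h
    exact (mul_eq_zero.1 h).resolve_left
      (by exact_mod_cast (by positivity : (k + 1) * (k + 1 + 1) ≠ 0))

theorem bernoulli_eval_eq_jacobiMatrix_pow_apply (x : K) {m n : ℕ} (hm : 0 < m) (hn : n ≤ m) :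
    ((Polynomial.bernoulli n).map (algebraMap ℚ K)).eval x =
      (jacobiMatrix m (fun _ => x - 1 / 2) (fun j => -recCoeff (j + 1)) ^ n)
        ⟨0, hm⟩ ⟨0, hm⟩ := by
  have h := map_pow_mul_eq_jacobiMatrix_pow_apply hm (moment x) X (orthoPoly x)
    (fun _ => x - 1 / 2) (fun j => -recCoeff (j + 1)) (X_mul_orthoPoly_zero x)
    (X_mul_orthoPoly_add_one x) (moment_orthoPoly x) hn
  rwa [orthoPoly, mul_one, moment_X_pow] at h

end BernoulliJacobi

/-- matrix representation for the Bernoulli polynomials.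
`RB_m` is the `m × m` tridiagonal matrix with diagonal entries `x - 1/2`,
subdiagonal entries `1`, and superdiagonal entry `-k⁴/(4(2k+1)(2k-1))` in
(1-indexed) row `k`. For `0 ≤ n ≤ m` the `(1,1)` entry of `(RB_m)^n` is
the Bernoulli polynomial `B_n(x)`. -/
theorem stmt_13 (x : ℝ) (m : ℕ) (hm : 1 ≤ m)
    (RB : Matrix (Fin m) (Fin m) ℝ)
    (hRB : ∀ i j : Fin m, RB i j =
      if (i : ℕ) = (j : ℕ) then x - 1 / 2
      else if (i : ℕ) = (j : ℕ) + 1 then 1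
      else if (j : ℕ) = (i : ℕ) + 1 then
        -(((i : ℕ) + 1 : ℝ) ^ 4 /
          (4 * (2 * ((i : ℕ) + 1 : ℝ) + 1) * (2 * ((i : ℕ) + 1 : ℝ) - 1)))
      else 0) :
    ∀ n : ℕ, n ≤ m →
      (RB ^ n) ⟨0, hm⟩ ⟨0, hm⟩ =
        ((Polynomial.bernoulli n).map (algebraMap ℚ ℝ)).eval x := by
  intro n hn
  have hJ : RB = jacobiMatrix m (fun _ => x - 1 / 2)
      (fun j => -BernoulliJacobi.recCoeff (j + 1)) := by
    ext i j
    rw [hRB]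
    simp [jacobiMatrix, jacobiEntry, BernoulliJacobi.recCoeff]
  rw [hJ]
  exact (BernoulliJacobi.bernoulli_eval_eq_jacobiMatrix_pow_apply x hm hn).symm
end

section
/- Let M_{n,k} be the generalized Motzkin numbers obtained from the choices σ_k = 0 (for all k ≥ 0) and τ_k = −k² (for all k ≥ 1). Then for every n ≥ 0, M_{n,0} = E_n, the n-th Euler number. In particular, each M_{n,0} is an integer, M_{n,0} = 0 for odd n, and the nonzero values alternate in sign. -/
/-!
The Motzkin recurrence determines the triangle, and it is the coefficientwise form of the system
`F_k' = F_{k-1} + σ_k F_k + τ_{k+1} F_{k+1}` (with `F_{-1} = 0`) for the exponential generating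
functions `F_k = ∑ₙ M_{n,k} xⁿ / n!` of the columns. For `σ = 0` and `τ_k = -k²` it is solved by
`F_k = sech x · tanh^k x / k!`, because `sech' = -sech · tanh` and `tanh' = 1 - tanh²`; hence
`M_{n,0} = n! [xⁿ] sech`. These coefficients are `E_n / n!`: multiplying the given expansion of
`sech z` by the Taylor series of `cosh z` near `0` yields the constant `1`, so `∑ E_n xⁿ / n!` is
the formal inverse of the series of `cosh`.

Integrality, the vanishing for odd `n` and the alternation of signs follow from the recurrence
alone, by induction on `n`.
-/

open PowerSeries Nat Filter Topology Finset

structure IsMotzkinTriangle (σ τ : ℕ → ℝ) (M : ℕ → ℕ → ℝ) : Prop where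
  zero_zero : M 0 0 = 1
  eq_zero_of_lt : ∀ n k, n < k → M n k = 0
  succ_zero : ∀ n, M (n + 1) 0 = σ 0 * M n 0 + τ 1 * M n 1
  succ_succ : ∀ n k,
    M (n + 1) (k + 1) = M n k + σ (k + 1) * M n (k + 1) + τ (k + 2) * M n (k + 2)

namespace IsMotzkinTriangle

variable {σ τ : ℕ → ℝ} {M : ℕ → ℕ → ℝ}

theorem unique {M' : ℕ → ℕ → ℝ} (hM : IsMotzkinTriangle σ τ M)
    (hM' : IsMotzkinTriangle σ τ M') : M = M' := by
  funext n
  induction n with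
  | zero =>
    funext k
    rcases k with _ | k
    · rw [hM.zero_zero, hM'.zero_zero]
    · rw [hM.eq_zero_of_lt 0 (k + 1) k.succ_pos, hM'.eq_zero_of_lt 0 (k + 1) k.succ_pos]
  | succ n ih =>
    funext k
    rcases k with _ | k
    · rw [hM.succ_zero, hM'.succ_zero, ih]
    · rw [hM.succ_succ, hM'.succ_succ, ih]

theorem exists_int (hM : IsMotzkinTriangle σ τ M) (hσ : ∀ k, ∃ a : ℤ, σ k = a)
    (hτ : ∀ k, ∃ b : ℤ, τ k = b) (n k : ℕ) : ∃ z : ℤ, M n k = z := by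
  induction n generalizing k with
  | zero =>
    rcases k with _ | k
    · exact ⟨1, by rw [hM.zero_zero, Int.cast_one]⟩
    · exact ⟨0, by rw [hM.eq_zero_of_lt 0 (k + 1) k.succ_pos, Int.cast_zero]⟩
  | succ n ih =>
    rcases k with _ | k
    · obtain ⟨a, ha⟩ := hσ 0
      obtain ⟨b, hb⟩ := hτ 1
      obtain ⟨x, hx⟩ := ih 0
      obtain ⟨y, hy⟩ := ih 1
      exact ⟨a * x + b * y, by rw [hM.succ_zero, ha, hb, hx, hy]; push_cast; ring⟩
    · obtain ⟨a, ha⟩ := hσ (k + 1)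
      obtain ⟨b, hb⟩ := hτ (k + 2)
      obtain ⟨x, hx⟩ := ih k
      obtain ⟨y, hy⟩ := ih (k + 1)
      obtain ⟨w, hw⟩ := ih (k + 2)
      exact ⟨x + a * y + b * w, by rw [hM.succ_succ, ha, hb, hx, hy, hw]; push_cast; ring⟩

theorem eq_zero_of_odd (hM : IsMotzkinTriangle σ τ M) (hσ : ∀ k, σ k = 0) {n k : ℕ}
    (h : Odd (n + k)) : M n k = 0 := by
  induction n generalizing k with
  | zero =>
    rcases k with _ | k
    · exact absurd h (by decide)
    · exact hM.eq_zero_of_lt 0 (k + 1) k.succ_pos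
  | succ n ih =>
    rw [Nat.odd_iff] at h
    rcases k with _ | k
    · rw [hM.succ_zero, hσ, ih (k := 1) (by rw [Nat.odd_iff]; omega)]
      ring
    · rw [hM.succ_succ, hσ, ih (k := k) (by rw [Nat.odd_iff]; omega),
        ih (k := k + 2) (by rw [Nat.odd_iff]; omega)]
      ring

theorem neg_one_pow_mul_pos (hM : IsMotzkinTriangle σ τ M) (hσ : ∀ k, σ k = 0)
    (hτ : ∀ k, τ (k + 1) < 0) (k j : ℕ) : 0 < (-1) ^ j * M (k + 2 * j) k := by
  induction h : k + 2 * j generalizing k j with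
  | zero =>
    obtain ⟨rfl, rfl⟩ : k = 0 ∧ j = 0 := by omega
    simp [hM.zero_zero]
  | succ n ih =>
    rcases k with _ | k
    · obtain ⟨j, rfl⟩ : ∃ i, j = i + 1 := ⟨j - 1, by omega⟩
      have hpos := ih 1 j (by omega)
      rw [hM.succ_zero, hσ, pow_succ]
      nlinarith [hτ 0]
    · rcases j with _ | j
      · have hpos := ih k 0 (by omega)
        rw [hM.succ_succ, hσ, hM.eq_zero_of_lt n (k + 2) (by omega)]
        simpa [show n = k by omega] using hpos
      · have h₁ := ih k (j + 1) (by omega)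
        have h₂ := ih (k + 2) j (by omega)
        have hτk : τ (k + 2) < 0 := hτ (k + 1)
        calc (0 : ℝ) < (-1) ^ (j + 1) * M n k + -τ (k + 2) * ((-1) ^ j * M n (k + 2)) := by
              nlinarith
          _ = (-1) ^ (j + 1) * M (n + 1) (k + 1) := by
              rw [hM.succ_succ, hσ]
              ring

end IsMotzkinTriangle

theorem PowerSeries.factorial_mul_coeff_succ_s14 {R : Type*} [CommSemiring R] (f : R⟦X⟧) (n : ℕ) :
    ((n + 1)! : R) * coeff (n + 1) f = n ! * coeff n (d⁄dX R f) := by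
  rw [coeff_derivative, factorial_succ]
  push_cast
  ring

theorem isMotzkinTriangle_of_derivative {σ τ : ℕ → ℝ} {F : ℕ → ℝ⟦X⟧}
    (h₀ : constantCoeff (F 0) = 1) (hX : ∀ k, X ^ k ∣ F k)
    (hd₀ : d⁄dX ℝ (F 0) = σ 0 • F 0 + τ 1 • F 1)
    (hd : ∀ k, d⁄dX ℝ (F (k + 1)) = F k + σ (k + 1) • F (k + 1) + τ (k + 2) • F (k + 2)) :
    IsMotzkinTriangle σ τ (fun n k => n ! * coeff n (F k)) where
  zero_zero := by simp [h₀]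
  eq_zero_of_lt n k h := by rw [X_pow_dvd_iff.mp (hX k) n h, mul_zero]
  succ_zero n := by
    rw [factorial_mul_coeff_succ_s14, hd₀]
    simp only [map_add, coeff_smul, smul_eq_mul]
    ring
  succ_succ n k := by
    rw [factorial_mul_coeff_succ_s14, hd]
    simp only [map_add, coeff_smul, smul_eq_mul]
    ring

noncomputable def coshSeries : ℝ⟦X⟧ := mk fun n => if Even n then (n ! : ℝ)⁻¹ else 0

noncomputable def sinhSeries : ℝ⟦X⟧ := mk fun n => if Even n then 0 else (n ! : ℝ)⁻¹

noncomputable def sechSeries : ℝ⟦X⟧ := coshSeries⁻¹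

noncomputable def tanhSeries : ℝ⟦X⟧ := sinhSeries * sechSeries

theorem inv_factorial_succ_mul {K : Type*} [Field K] [CharZero K] (n : ℕ) :
    ((n + 1)! : K)⁻¹ * (n + 1) = (n ! : K)⁻¹ := by
  rw [factorial_succ]
  push_cast
  field_simp

theorem derivative_coshSeries : d⁄dX ℝ coshSeries = sinhSeries := by
  ext n
  rcases n.even_or_odd with h | h
  · simp [coshSeries, sinhSeries, coeff_derivative, h, Nat.even_add_one]
  · simp [coshSeries, sinhSeries, coeff_derivative, h, Nat.not_even_iff_odd.mpr h,
      inv_factorial_succ_mul]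

theorem derivative_sinhSeries : d⁄dX ℝ sinhSeries = coshSeries := by
  ext n
  rcases n.even_or_odd with h | h
  · simp [coshSeries, sinhSeries, coeff_derivative, h, Nat.even_add_one, inv_factorial_succ_mul]
  · simp [coshSeries, sinhSeries, coeff_derivative, h, Nat.not_even_iff_odd.mpr h]

theorem constantCoeff_coshSeries : constantCoeff coshSeries = 1 := by
  simp [coshSeries, ← coeff_zero_eq_constantCoeff_apply]

theorem constantCoeff_sinhSeries : constantCoeff sinhSeries = 0 := by
  simp [sinhSeries, ← coeff_zero_eq_constantCoeff_apply]

theorem coshSeries_mul_sechSeries : coshSeries * sechSeries = 1 :=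
  PowerSeries.mul_inv_cancel _ (by simp [constantCoeff_coshSeries])

theorem derivative_sechSeries : d⁄dX ℝ sechSeries = -(sechSeries * tanhSeries) := by
  rw [sechSeries, tanhSeries, sechSeries, derivative_inv', derivative_coshSeries]
  ring

theorem derivative_tanhSeries : d⁄dX ℝ tanhSeries = 1 - tanhSeries ^ 2 := by
  rw [tanhSeries, Derivation.leibniz, derivative_sechSeries, derivative_sinhSeries, smul_eq_mul,
    smul_eq_mul, tanhSeries]
  linear_combination coshSeries_mul_sechSeries

theorem derivative_sechSeries_mul_tanhSeries_pow (k : ℕ) :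
    d⁄dX ℝ (sechSeries * tanhSeries ^ (k + 1)) =
      ((k : ℝ) + 1) • (sechSeries * tanhSeries ^ k) -
        ((k : ℝ) + 2) • (sechSeries * tanhSeries ^ (k + 2)) := by
  rw [Derivation.leibniz, derivative_pow, derivative_sechSeries, derivative_tanhSeries,
    smul_eq_mul, smul_eq_mul, smul_eq_C_mul, smul_eq_C_mul]
  simp only [map_add, map_natCast, map_one, map_ofNat, add_tsub_cancel_right]
  push_cast
  ring

noncomputable def eulerColumn (k : ℕ) : ℝ⟦X⟧ := (k ! : ℝ)⁻¹ • (sechSeries * tanhSeries ^ k)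

theorem eulerColumn_zero : eulerColumn 0 = sechSeries := by
  simp [eulerColumn]

theorem derivative_eulerColumn_succ (k : ℕ) :
    d⁄dX ℝ (eulerColumn (k + 1)) = eulerColumn k - ((k : ℝ) + 2) ^ 2 • eulerColumn (k + 2) := by
  have h₁ : ((k + 1)! : ℝ)⁻¹ * ((k : ℝ) + 1) = (k ! : ℝ)⁻¹ := inv_factorial_succ_mul k
  have h₂ : ((k + 1)! : ℝ)⁻¹ * ((k : ℝ) + 2) = ((k : ℝ) + 2) ^ 2 * ((k + 2)! : ℝ)⁻¹ := by
    rw [factorial_succ (k + 1)]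
    push_cast
    field_simp
    ring
  rw [eulerColumn, Derivation.map_smul, derivative_sechSeries_mul_tanhSeries_pow, eulerColumn,
    eulerColumn]
  linear_combination (norm := module) h₁ • (sechSeries * tanhSeries ^ k) -
    h₂ • (sechSeries * tanhSeries ^ (k + 2))

theorem isMotzkinTriangle_eulerColumn :
    IsMotzkinTriangle (fun _ => 0) (fun k => -((k : ℝ) ^ 2))
      (fun n k => n ! * coeff n (eulerColumn k)) := by
  refine isMotzkinTriangle_of_derivative ?_ (fun k => ?_) ?_ (fun k => ?_)
  · simp [eulerColumn_zero, sechSeries, constantCoeff_coshSeries]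
  · have hX : X ∣ tanhSeries := X_dvd_iff.mpr (by simp [tanhSeries, constantCoeff_sinhSeries])
    rw [eulerColumn, smul_eq_C_mul]
    exact ((pow_dvd_pow_of_dvd hX k).mul_left _).mul_left _
  · rw [eulerColumn_zero, derivative_sechSeries]
    simp [eulerColumn]
  · rw [derivative_eulerColumn_succ]
    push_cast
    simp only [zero_smul, add_zero, neg_smul, sub_eq_add_neg]

theorem PowerSeries.hasSum_coeff_mul_mul_pow {R : Type*} [NormedCommRing R] [CompleteSpace R]
    {P Q : R⟦X⟧} {z a b : R}
    (hP : HasSum (fun n => coeff n P * z ^ n) a) (hQ : HasSum (fun n => coeff n Q * z ^ n) b)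
    (hP' : Summable fun n => ‖coeff n P * z ^ n‖) (hQ' : Summable fun n => ‖coeff n Q * z ^ n‖) :
    HasSum (fun n => coeff n (P * Q) * z ^ n) (a * b) := by
  have hterm : (fun n => coeff n (P * Q) * z ^ n) = fun n =>
      ∑ kl ∈ antidiagonal n, (coeff kl.1 P * z ^ kl.1) * (coeff kl.2 Q * z ^ kl.2) := by
    funext n
    rw [coeff_mul, Finset.sum_mul]
    refine Finset.sum_congr rfl fun kl hkl => ?_
    rw [← mem_antidiagonal.mp hkl, pow_add]
    ring
  rw [hterm, ← hP.tsum_eq, ← hQ.tsum_eq,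
    tsum_mul_tsum_eq_tsum_sum_antidiagonal_of_summable_norm hP' hQ']
  exact (summable_norm_sum_mul_antidiagonal_of_summable_norm hP' hQ').of_norm.hasSum

theorem PowerSeries.eq_of_eventually_hasSum {𝕜 : Type*} [NontriviallyNormedField 𝕜]
    {P Q : 𝕜⟦X⟧} {f : 𝕜 → 𝕜}
    (hP : ∀ᶠ z in 𝓝 0, HasSum (fun n => coeff n P * z ^ n) (f z))
    (hQ : ∀ᶠ z in 𝓝 0, HasSum (fun n => coeff n Q * z ^ n) (f z)) : P = Q := by
  have hseries (S : 𝕜⟦X⟧) (hS : ∀ᶠ z in 𝓝 0, HasSum (fun n => coeff n S * z ^ n) (f z)) :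
      HasFPowerSeriesAt f (FormalMultilinearSeries.ofScalars 𝕜 fun n => coeff n S) 0 := by
    rw [hasFPowerSeriesAt_iff]
    simpa [FormalMultilinearSeries.coeff_ofScalars, mul_comm] using hS
  ext n
  exact congrFun (FormalMultilinearSeries.ofScalars_series_injective 𝕜 𝕜
    ((hseries P hP).eq_formalMultilinearSeries (hseries Q hQ))) n

theorem summable_norm_mul_pow_of_summable {α : Type*} [NormedDivisionRing α] {f : ℕ → α}
    {w z : α} (h : Summable fun n => f n * w ^ n) (hz : ‖z‖ < ‖w‖) :
    Summable fun n => ‖f n * z ^ n‖ := by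
  have hw : 0 < ‖w‖ := (norm_nonneg z).trans_lt hz
  obtain ⟨C, hC⟩ := h.tendsto_atTop_zero.norm.bddAbove_range
  refine Summable.of_nonneg_of_le (fun n => norm_nonneg _) (fun n => ?_)
    ((summable_geometric_of_lt_one (by positivity) ((div_lt_one hw).mpr hz)).mul_left C)
  have hn : ‖f n‖ * ‖w‖ ^ n ≤ C := by simpa using hC ⟨n, rfl⟩
  calc ‖f n * z ^ n‖ = ‖f n‖ * ‖w‖ ^ n * (‖z‖ / ‖w‖) ^ n := by
        rw [norm_mul, norm_pow, div_pow]
        field_simp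
    _ ≤ C * (‖z‖ / ‖w‖) ^ n := by gcongr

theorem Complex.cosh_ne_zero_of_abs_im_lt {z : ℂ} (hz : |z.im| < Real.pi / 2) : cosh z ≠ 0 := by
  have hcos : 0 < Real.cos z.im := Real.cos_pos_of_mem_Ioo (abs_lt.mp hz)
  have hre : 0 < (2 * cosh z).re := by
    rw [two_cosh, add_re, exp_re, exp_re, neg_re, neg_im, Real.cos_neg]
    positivity
  intro h
  simp [h] at hre

theorem hasSum_coshSeries (z : ℂ) :
    HasSum (fun n => coeff n (map Complex.ofRealHom coshSeries) * z ^ n) (Complex.cosh z) := by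
  rw [← (mul_right_injective₀ (two_ne_zero' ℕ)).hasSum_iff]
  · simpa [coshSeries, Function.comp_def, div_eq_inv_mul] using Complex.hasSum_cosh z
  · rintro n hn
    have hodd : ¬Even n := fun ⟨m, hm⟩ => hn ⟨m, by simp [hm, two_mul]⟩
    simp [coshSeries, hodd]

theorem mk_mul_coshSeries_eq_one (E : ℕ → ℝ)
    (hE : ∀ z : ℂ, ‖z‖ < 1 →
      HasSum (fun n => (E n : ℂ) * z ^ n / (n ! : ℂ)) (2 / (Complex.exp z + Complex.exp (-z)))) :
    mk (fun n => E n / n !) * coshSeries = 1 := by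
  apply map_injective Complex.ofRealHom Complex.ofReal_injective
  rw [map_mul, map_one]
  have hsech (z : ℂ) (hz : ‖z‖ < 1) : HasSum (fun n => coeff n (map Complex.ofRealHom
      (mk fun n => E n / n !)) * z ^ n) (2 / (Complex.exp z + Complex.exp (-z))) := by
    simpa [div_eq_mul_inv, mul_right_comm] using hE z hz
  refine eq_of_eventually_hasSum (f := fun _ => 1) ?_ (Eventually.of_forall fun z => ?_)
  · filter_upwards [Metric.ball_mem_nhds (0 : ℂ) one_half_pos] with z hz
    rw [mem_ball_zero_iff] at hz
    have hcosh : Complex.cosh z ≠ 0 := Complex.cosh_ne_zero_of_abs_im_lt <|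
      (Complex.abs_im_le_norm z).trans_lt (by linarith [Real.pi_gt_three])
    have hsech_norm := summable_norm_mul_pow_of_summable (w := 1 / 2)
      (hsech _ (by norm_num)).summable (by simpa using hz)
    have hcosh_norm := summable_norm_mul_pow_of_summable (w := ((‖z‖ + 1 : ℝ) : ℂ)) (z := z)
      (hasSum_coshSeries _).summable
      (by rw [Complex.norm_real, Real.norm_of_nonneg (by positivity)]; linarith)
    have hprod : 2 / (Complex.exp z + Complex.exp (-z)) * Complex.cosh z = 1 := by
      rw [← Complex.two_cosh]
      field_simp
    rw [← hprod]
    exact hasSum_coeff_mul_mul_pow (hsech z (by linarith)) (hasSum_coshSeries z)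
      hsech_norm hcosh_norm
  · have h := hasSum_single (f := fun n => coeff n (1 : ℂ⟦X⟧) * z ^ n) 0
      (fun n hn => by simp [coeff_one, hn])
    simpa using h

theorem coeff_sechSeries (E : ℕ → ℝ)
    (hE : ∀ z : ℂ, ‖z‖ < 1 →
      HasSum (fun n => (E n : ℂ) * z ^ n / (n ! : ℂ)) (2 / (Complex.exp z + Complex.exp (-z))))
    (n : ℕ) : coeff n sechSeries = E n / n ! := by
  rw [sechSeries, ← (eq_inv_iff_mul_eq_one (by simp [constantCoeff_coshSeries])).mpr
    (mk_mul_coshSeries_eq_one E hE), coeff_mk]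

/-- the generalized Motzkin numbers built from `σ_k = 0` and
`τ_k = -k²` satisfy `M_{n,0} = E_n`, the Euler numbers (EGF `sech z`).
In particular each `M_{n,0}` is an integer, `M_{n,0} = 0` for odd `n`, and the
(nonzero) even-indexed values alternate in sign: `(-1)^j M_{2j,0} > 0`.
The Motzkin recurrence `M_{n+1,k} = M_{n,k-1} + σ_k M_{n,k} + τ_{k+1} M_{n,k+1}`
(with `M_{n,k} = 0` for `k < 0` or `k > n`) is encoded with natural-number
indices: the `k = 0` case drops the `M_{n,-1}` term. -/
theorem stmt_14
    (E : ℕ → ℝ)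
    (hE : ∀ z : ℂ, ‖z‖ < 1 →
      HasSum (fun n : ℕ => (E n : ℂ) * z ^ n / (n.factorial : ℂ))
        (2 / (Complex.exp z + Complex.exp (-z))))
    (M : ℕ → ℕ → ℝ)
    (hM00 : M 0 0 = 1)
    (hMhigh : ∀ n k : ℕ, n < k → M n k = 0)
    (hM0 : ∀ n : ℕ, M (n + 1) 0 =
      0 * M n 0 + (-((1 : ℝ) ^ 2)) * M n 1)
    (hMk : ∀ n k : ℕ, M (n + 1) (k + 1) =
      M n k + 0 * M n (k + 1) + (-(((k : ℝ) + 2) ^ 2)) * M n (k + 2)) :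
    (∀ n : ℕ, M n 0 = E n) ∧
    (∀ n : ℕ, ∃ z : ℤ, M n 0 = (z : ℝ)) ∧
    (∀ n : ℕ, Odd n → M n 0 = 0) ∧
    (∀ j : ℕ, 0 < (-1 : ℝ) ^ j * M (2 * j) 0) := by
  have hM : IsMotzkinTriangle (fun _ => 0) (fun k => -((k : ℝ) ^ 2)) M :=
    ⟨hM00, hMhigh, fun n => by simpa using hM0 n, fun n k => by rw [hMk]; push_cast; ring⟩
  refine ⟨fun n => ?_, fun n => ?_, fun n hn => ?_, fun j => ?_⟩
  · rw [hM.unique isMotzkinTriangle_eulerColumn]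
    dsimp only
    rw [eulerColumn_zero, coeff_sechSeries E hE]
    field_simp
  · exact hM.exists_int (fun _ => ⟨0, by simp⟩) (fun k => ⟨-(k ^ 2 : ℤ), by simp⟩) n 0
  · exact hM.eq_zero_of_odd (fun _ => rfl) (by simpa using hn)
  · simpa using hM.neg_one_pow_mul_pos (fun _ => rfl) (fun k => by simp; positivity) 0 j
end

section
/- Let M_{n,k} be the generalized Motzkin numbers obtained from the choices σ_k = 0 (for all k ≥ 0) and τ_k = −k²/4 (for all k ≥ 1). Then for every n ≥ 0, M_{n,0} = E_n/2^n, where E_n is the n-th Euler number. -/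
/-!
Let `F_k(z) = ∑ₙ M_{n,k} zⁿ/n!` be the exponential generating function of the `k`-th column.
The recurrence reads `F_k' = F_{k-1} - (k+1)²/4 · F_{k+1}`, and it is solved by
`cosh(z/2) F_k = (2 tanh(z/2))^k / k!`. Only the consequence
`(k+1) cosh(z/2) F_{k+1} = 2 sinh(z/2) F_k` is needed; it is checked coefficientwise by induction
on `n`. At `k = 0`, together with `F_0' = -F_1/4`, it makes `(cosh(z/2) F_0)'` vanish, so
`cosh(z/2) F_0 = 1`. On the other side, `cosh z · sech z = 1` for `‖z‖ < 1` and uniqueness of power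
series coefficients give `cosh z · ∑ Eₙ zⁿ/n! = 1` coefficientwise. Since `cosh` has constant term
`1`, these identities determine `F_0(2z) = ∑ Eₙ zⁿ/n!`.
-/

open Finset

section BinomConv

variable {R : Type*} [CommSemiring R]

/-- The coefficients of the product of exponential generating functions:
`(∑ aₙ zⁿ/n!) (∑ bₙ zⁿ/n!) = ∑ binomConv a b n · zⁿ/n!`. -/
noncomputable def binomConv (a b : ℕ → R) (n : ℕ) : R :=
  ∑ p ∈ antidiagonal n, (n.choose p.1 : R) * a p.1 * b p.2

theorem binomConv_zero (a b : ℕ → R) : binomConv a b 0 = a 0 * b 0 := by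
  simp [binomConv]

theorem binomConv_succ (a b : ℕ → R) (n : ℕ) :
    binomConv a b (n + 1) =
      binomConv (fun i => a (i + 1)) b n + binomConv a (fun j => b (j + 1)) n := by
  simp only [binomConv, mul_assoc]
  rw [sum_antidiagonal_choose_succ_mul (fun i j => a i * b j), add_comm]
  congr 1
  refine sum_congr rfl fun p hp => ?_
  rw [Nat.choose_symm_of_eq_add (mem_antidiagonal.1 hp).symm]

theorem binomConv_const_mul_left (c : R) (a b : ℕ → R) (n : ℕ) :
    binomConv (fun i => c * a i) b n = c * binomConv a b n := by
  simp only [binomConv, mul_sum]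
  exact sum_congr rfl fun _ _ => by ring

theorem binomConv_const_mul_right (c : R) (a b : ℕ → R) (n : ℕ) :
    binomConv a (fun j => c * b j) n = c * binomConv a b n := by
  simp only [binomConv, mul_sum]
  exact sum_congr rfl fun _ _ => by ring

theorem binomConv_pow_mul (x : R) (a b : ℕ → R) (n : ℕ) :
    binomConv (fun i => x ^ i * a i) (fun j => x ^ j * b j) n = x ^ n * binomConv a b n := by
  simp only [binomConv, mul_sum]
  refine sum_congr rfl fun p hp => ?_
  rw [← (mem_antidiagonal.1 hp), pow_add]
  ring

theorem map_binomConv {S : Type*} [CommSemiring S] (f : R →+* S) (a b : ℕ → R) (n : ℕ) :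
    f (binomConv a b n) = binomConv (fun i => f (a i)) (fun j => f (b j)) n := by
  simp [binomConv]

end BinomConv

section BinomConvRing

variable {R : Type*} [CommRing R]

theorem binomConv_sub_left (a a' b : ℕ → R) (n : ℕ) :
    binomConv (fun i => a i - a' i) b n = binomConv a b n - binomConv a' b n := by
  simp only [binomConv, ← sum_sub_distrib]
  exact sum_congr rfl fun _ _ => by ring

theorem eq_of_binomConv_eq {a b w : ℕ → R} (hw : w 0 = 1)
    (h : ∀ n, binomConv a w n = binomConv b w n) : a = b := by
  funext n
  induction n using Nat.strong_induction_on with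
  | _ n ih =>
    have hlow : ∑ k ∈ range n, (n.choose k : R) * a k * w (n - k) =
        ∑ k ∈ range n, (n.choose k : R) * b k * w (n - k) :=
      sum_congr rfl fun k hk => by rw [ih k (mem_range.1 hk)]
    have key := h n
    rw [binomConv, binomConv,
      Nat.sum_antidiagonal_eq_sum_range_succ (fun i j => (n.choose i : R) * a i * w j),
      Nat.sum_antidiagonal_eq_sum_range_succ (fun i j => (n.choose i : R) * b i * w j),
      sum_range_succ, sum_range_succ, hlow, add_right_inj] at key
    simpa [hw] using key

end BinomConvRing

theorem hasSum_binomConv {𝕜 : Type*} [RCLike 𝕜] {a b : ℕ → 𝕜} {z A B : 𝕜}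
    (ha : HasSum (fun n => a n * z ^ n / n.factorial) A)
    (hb : HasSum (fun n => b n * z ^ n / n.factorial) B) :
    HasSum (fun n => binomConv a b n * z ^ n / n.factorial) (A * B) := by
  have hprod := tsum_mul_tsum_eq_tsum_sum_antidiagonal_of_summable_norm
    ha.summable.norm hb.summable.norm
  rw [ha.tsum_eq, hb.tsum_eq] at hprod
  have hterm : ∀ n, ∑ p ∈ antidiagonal n, a p.1 * z ^ p.1 / p.1.factorial *
      (b p.2 * z ^ p.2 / p.2.factorial) = binomConv a b n * z ^ n / n.factorial := by
    intro n
    simp only [binomConv, sum_mul, sum_div]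
    refine sum_congr rfl fun p hp => ?_
    obtain rfl := mem_antidiagonal.1 hp
    have hfact : ((p.1 + p.2).choose p.1 * p.1.factorial * p.2.factorial : 𝕜) =
        (p.1 + p.2).factorial := by
      rw [Nat.choose_symm_add]
      exact_mod_cast Nat.add_choose_mul_factorial_mul_factorial p.1 p.2
    have hchoose : ((p.1 + p.2).choose p.1 : 𝕜) ≠ 0 :=
      Nat.cast_ne_zero.2 (Nat.choose_pos (Nat.le_add_right _ _)).ne'
    rw [← hfact, pow_add]
    field_simp
  simp only [hterm] at hprod
  rw [hprod]
  exact ((summable_norm_sum_mul_antidiagonal_of_summable_norm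
    ha.summable.norm hb.summable.norm).of_norm.congr hterm).hasSum

/-- `coshCoeff x` and `sinhCoeff x` are the EGF coefficients of `cosh (x z)` and `sinh (x z)`. -/
noncomputable def coshCoeff (x : ℝ) (m : ℕ) : ℝ := (x ^ m + (-x) ^ m) / 2

noncomputable def sinhCoeff (x : ℝ) (m : ℕ) : ℝ := (x ^ m - (-x) ^ m) / 2

@[simp] theorem coshCoeff_zero (x : ℝ) : coshCoeff x 0 = 1 := by norm_num [coshCoeff]

@[simp] theorem sinhCoeff_zero (x : ℝ) : sinhCoeff x 0 = 0 := by simp [sinhCoeff]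

theorem coshCoeff_succ (x : ℝ) (m : ℕ) : coshCoeff x (m + 1) = x * sinhCoeff x m := by
  simp only [coshCoeff, sinhCoeff]; ring

theorem sinhCoeff_succ (x : ℝ) (m : ℕ) : sinhCoeff x (m + 1) = x * coshCoeff x m := by
  simp only [coshCoeff, sinhCoeff]; ring

theorem coshCoeff_mul (x y : ℝ) (m : ℕ) : coshCoeff (x * y) m = x ^ m * coshCoeff y m := by
  simp only [coshCoeff, mul_pow]; ring

theorem hasSum_coshCoeff_one (z : ℂ) :
    HasSum (fun n => (coshCoeff 1 n : ℂ) * z ^ n / n.factorial)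
      ((Complex.exp z + Complex.exp (-z)) / 2) := by
  have hexp (w : ℂ) : HasSum (fun n => w ^ n / n.factorial) (Complex.exp w) := by
    rw [Complex.exp_eq_exp_ℂ]; exact NormedSpace.expSeries_div_hasSum_exp w
  have hcoeff : (fun n => (coshCoeff 1 n : ℂ) * z ^ n / n.factorial) =
      fun n => (z ^ n / n.factorial + (-z) ^ n / n.factorial) / 2 := by
    funext n
    simp only [coshCoeff, neg_pow z]
    push_cast
    ring
  rw [hcoeff]
  exact ((hexp z).add (hexp (-z))).div_const 2

theorem exp_add_exp_neg_ne_zero {z : ℂ} (hz : ‖z‖ < Real.pi / 2) :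
    Complex.exp z + Complex.exp (-z) ≠ 0 := by
  rw [← Complex.two_cosh, ← Complex.cos_mul_I]
  refine mul_ne_zero two_ne_zero fun hcos => ?_
  obtain ⟨k, hk⟩ := Complex.cos_eq_zero_iff.1 hcos
  have hodd : 1 ≤ ‖2 * (k : ℂ) + 1‖ := by
    have hcast : ((2 * k + 1 : ℤ) : ℂ) = 2 * (k : ℂ) + 1 := by push_cast; ring
    rw [← hcast, Complex.norm_intCast]
    exact_mod_cast Int.one_le_abs (by omega)
  have hnorm := congrArg norm hk
  rw [norm_mul, Complex.norm_I, mul_one, norm_div, norm_mul, Complex.norm_real,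
    Real.norm_of_nonneg Real.pi_pos.le, Complex.norm_ofNat] at hnorm
  nlinarith [Real.pi_pos]

theorem hasFPowerSeriesOnBall_ofScalars {c : ℕ → ℂ} {f : ℂ → ℂ} {r : NNReal} (hr : 0 < r)
    (h : ∀ z : ℂ, ‖z‖ < r → HasSum (fun n => c n * z ^ n) (f z)) :
    HasFPowerSeriesOnBall f (FormalMultilinearSeries.ofScalars ℂ c) 0 r := by
  refine ⟨ENNReal.le_of_forall_nnreal_lt fun t ht => ?_, by exact_mod_cast hr, fun {y} hy => ?_⟩
  · refine FormalMultilinearSeries.le_radius_of_summable_norm _ ?_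
    have ht' : ‖((t : ℝ) : ℂ)‖ < r := by simpa using ht
    simpa [FormalMultilinearSeries.ofScalars_norm] using (h _ ht').summable.norm
  · have hy' : ‖y‖ < r := by simpa using hy
    simpa [FormalMultilinearSeries.ofScalars_apply_eq, mul_comm] using h y hy'

theorem eq_of_hasSum_pow {a b : ℕ → ℂ} {f : ℂ → ℂ} {r : NNReal} (hr : 0 < r)
    (ha : ∀ z : ℂ, ‖z‖ < r → HasSum (fun n => a n * z ^ n) (f z))
    (hb : ∀ z : ℂ, ‖z‖ < r → HasSum (fun n => b n * z ^ n) (f z)) : a = b :=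
  FormalMultilinearSeries.ofScalars_series_injective ℂ ℂ <|
    (hasFPowerSeriesOnBall_ofScalars hr ha).hasFPowerSeriesAt.eq_formalMultilinearSeries
      (hasFPowerSeriesOnBall_ofScalars hr hb).hasFPowerSeriesAt

theorem binomConv_coshCoeff_one_of_hasSum_sech {E : ℕ → ℝ}
    (hE : ∀ z : ℂ, ‖z‖ < 1 →
      HasSum (fun n => (E n : ℂ) * z ^ n / n.factorial) (2 / (Complex.exp z + Complex.exp (-z))))
    (n : ℕ) : binomConv E (coshCoeff 1) n = if n = 0 then 1 else 0 := by
  have hcast (n : ℕ) : ((binomConv E (coshCoeff 1) n : ℝ) : ℂ) =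
      binomConv (fun i => (E i : ℂ)) (fun j => (coshCoeff 1 j : ℂ)) n :=
    map_binomConv Complex.ofRealHom E (coshCoeff 1) n
  have hprod : ∀ z : ℂ, ‖z‖ < (1 : NNReal) → HasSum
      (fun n => ((binomConv E (coshCoeff 1) n / n.factorial : ℝ) : ℂ) * z ^ n) 1 := by
    intro z hz
    have hz' : ‖z‖ < 1 := by simpa using hz
    have hden := exp_add_exp_neg_ne_zero (hz'.trans (by linarith [Real.pi_gt_three]))
    have h := hasSum_binomConv (hE z hz') (hasSum_coshCoeff_one z)
    rw [div_mul_div_cancel₀ hden, div_self two_ne_zero] at h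
    have hterm : (fun n => ((binomConv E (coshCoeff 1) n / n.factorial : ℝ) : ℂ) * z ^ n) =
        fun n => binomConv (fun i => (E i : ℂ)) (fun j => (coshCoeff 1 j : ℂ)) n * z ^ n /
          n.factorial := by
      funext n
      push_cast [hcast]
      ring
    rwa [hterm]
  have hdelta : ∀ z : ℂ, ‖z‖ < (1 : NNReal) → HasSum
      (fun n => (((if n = 0 then 1 else 0 : ℝ) / n.factorial : ℝ) : ℂ) * z ^ n) 1 := by
    intro z _
    convert hasSum_ite_eq 0 (1 : ℂ) using 2 with n
    split_ifs <;> simp_all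
  have h := congrFun (eq_of_hasSum_pow one_pos hprod hdelta) n
  rw [Complex.ofReal_inj, div_left_inj' (by positivity)] at h
  exact h

section Motzkin

variable {M : ℕ → ℕ → ℝ}

theorem binomConv_column_zero_succ (hM0 : ∀ n, M (n + 1) 0 = -4⁻¹ * M n 1)
    {w w' : ℕ → ℝ} (hw : ∀ m, w (m + 1) = 2⁻¹ * w' m) (n : ℕ) :
    binomConv (fun j => M j 0) w (n + 1) =
      2⁻¹ * binomConv (fun j => M j 0) w' n - 4⁻¹ * binomConv (fun j => M j 1) w n := by
  simp only [binomConv_succ, hM0, hw, binomConv_const_mul_left, binomConv_const_mul_right]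
  ring

theorem binomConv_column_succ_succ
    (hMk : ∀ n k, M (n + 1) (k + 1) = M n k - ((k : ℝ) + 2) ^ 2 / 4 * M n (k + 2))
    {w w' : ℕ → ℝ} (hw : ∀ m, w (m + 1) = 2⁻¹ * w' m) (n k : ℕ) :
    binomConv (fun j => M j (k + 1)) w (n + 1) =
      2⁻¹ * binomConv (fun j => M j (k + 1)) w' n + binomConv (fun j => M j k) w n
        - ((k : ℝ) + 2) ^ 2 / 4 * binomConv (fun j => M j (k + 2)) w n := by
  simp only [binomConv_succ, hMk, hw, binomConv_sub_left, binomConv_const_mul_left,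
    binomConv_const_mul_right]
  ring

theorem succ_mul_binomConv_column_coshCoeff (hM0k : ∀ k, M 0 (k + 1) = 0)
    (hM0 : ∀ n, M (n + 1) 0 = -4⁻¹ * M n 1)
    (hMk : ∀ n k, M (n + 1) (k + 1) = M n k - ((k : ℝ) + 2) ^ 2 / 4 * M n (k + 2)) (n k : ℕ) :
    ((k : ℝ) + 1) * binomConv (fun j => M j (k + 1)) (coshCoeff 2⁻¹) n =
      2 * binomConv (fun j => M j k) (sinhCoeff 2⁻¹) n := by
  induction n generalizing k with
  | zero => simp [binomConv_zero, hM0k]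
  | succ n ih =>
    cases k with
    | zero =>
      rw [binomConv_column_succ_succ hMk (coshCoeff_succ 2⁻¹),
        binomConv_column_zero_succ hM0 (sinhCoeff_succ 2⁻¹)]
      have h1 := ih 1
      simp only [Nat.cast_zero, Nat.cast_one, zero_add, Nat.reduceAdd] at h1 ⊢
      linear_combination (-1 / 2 : ℝ) * h1
    | succ k =>
      rw [binomConv_column_succ_succ hMk (coshCoeff_succ 2⁻¹),
        binomConv_column_succ_succ hMk (sinhCoeff_succ 2⁻¹)]
      have h1 := ih k
      have h2 := ih (k + 2)
      push_cast at h1 h2 ⊢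
      linear_combination h1 - ((k : ℝ) + 2) * ((k : ℝ) + 3) / 4 * h2

theorem binomConv_column_zero_coshCoeff (hM00 : M 0 0 = 1) (hM0k : ∀ k, M 0 (k + 1) = 0)
    (hM0 : ∀ n, M (n + 1) 0 = -4⁻¹ * M n 1)
    (hMk : ∀ n k, M (n + 1) (k + 1) = M n k - ((k : ℝ) + 2) ^ 2 / 4 * M n (k + 2)) (n : ℕ) :
    binomConv (fun j => M j 0) (coshCoeff 2⁻¹) n = if n = 0 then 1 else 0 := by
  cases n with
  | zero => simp [binomConv_zero, hM00]
  | succ n =>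
    have h := succ_mul_binomConv_column_coshCoeff hM0k hM0 hMk n 0
    rw [binomConv_column_zero_succ hM0 (coshCoeff_succ 2⁻¹)]
    norm_num at h ⊢
    linarith

end Motzkin

/-- the generalized Motzkin numbers built from `σ_k = 0` and
`τ_k = -k²/4` satisfy `M_{n,0} = E_n / 2^n`, where `E_n` are the Euler numbers
(EGF `sech z`).
The Motzkin recurrence `M_{n+1,k} = M_{n,k-1} + σ_k M_{n,k} + τ_{k+1} M_{n,k+1}`
(with `M_{n,k} = 0` for `k < 0` or `k > n`) is encoded with natural-number
indices: the `k = 0` case drops the `M_{n,-1}` term. -/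
theorem stmt_15
    (E : ℕ → ℝ)
    (hE : ∀ z : ℂ, ‖z‖ < 1 →
      HasSum (fun n : ℕ => (E n : ℂ) * z ^ n / (n.factorial : ℂ))
        (2 / (Complex.exp z + Complex.exp (-z))))
    (M : ℕ → ℕ → ℝ)
    (hM00 : M 0 0 = 1)
    (hMhigh : ∀ n k : ℕ, n < k → M n k = 0)
    (hM0 : ∀ n : ℕ, M (n + 1) 0 =
      0 * M n 0 + (-((1 : ℝ) ^ 2 / 4)) * M n 1)
    (hMk : ∀ n k : ℕ, M (n + 1) (k + 1) =
      M n k + 0 * M n (k + 1) + (-(((k : ℝ) + 2) ^ 2 / 4)) * M n (k + 2)) :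
    ∀ n : ℕ, M n 0 = E n / 2 ^ n := by
  have hM0k (k : ℕ) : M 0 (k + 1) = 0 := hMhigh 0 (k + 1) k.succ_pos
  have hM0' (n : ℕ) : M (n + 1) 0 = -4⁻¹ * M n 1 := by rw [hM0]; ring
  have hMk' (n k : ℕ) : M (n + 1) (k + 1) = M n k - ((k : ℝ) + 2) ^ 2 / 4 * M n (k + 2) := by
    rw [hMk]; ring
  have hcosh : coshCoeff 1 = fun m => 2 ^ m * coshCoeff 2⁻¹ m := by
    funext m
    rw [← coshCoeff_mul]
    norm_num
  have hscaled : (fun j => 2 ^ j * M j 0) = E := by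
    refine eq_of_binomConv_eq (coshCoeff_zero 1) fun n => ?_
    rw [binomConv_coshCoeff_one_of_hasSum_sech hE, hcosh, binomConv_pow_mul,
      binomConv_column_zero_coshCoeff hM00 hM0k hM0' hMk']
    split_ifs with hn <;> simp [hn]
  intro n
  rw [← hscaled, eq_div_iff (by positivity), mul_comm]
end

section
/- Fix an integer p ≥ 1 and a real number x, and let L^(p) be the linear functional on real polynomials in y determined by L^(p)(y^k) = B_k^(p)(x), where B_n^(p)(x) are the higher-order Bernoulli polynomials. Suppose (P_n)_{n≥0} are monic real polynomials with P_0 = 1, P_1(y) = y − a_0, P_{n+1}(y) = (y − a_n)P_n(y) − b_n P_{n−1}(y) for n ≥ 1, satisfying the orthogonality L^(p)(y^r P_n(y)) = 0 for all 0 ≤ r < n, and the nondegeneracy condition L^(p)(y^n P_n(y)) ≠ 0 for all n. Then a_n = x − p/2 for every n ≥ 0. -/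
/-!
Centre everything at `c = x - p/2`. The moments `L((y - c)^n)` have exponential generating
function `(z/(e^z-1))^p e^{pz/2} = ((z/2)/sinh(z/2))^p`, which is even, so the odd centred
moments vanish and `L` is invariant under the reflection `y ↦ 2c - y`. By uniqueness of monic
orthogonal polynomials this gives `P_n(2c - y) = (-1)^n P_n(y)`, hence `L((y - c) P_n²) = 0`.
Pairing the recurrence with `P_n` gives `L((y - a_n) P_n²) = 0`, so `(c - a_n) L(P_n²) = 0`,
and `L(P_n²) = L(y^n P_n) ≠ 0`.
-/

open Polynomial Finset
open scoped Nat

-- Holds for every `z`: when `exp z = 1` both sides are junk divisions by zero.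
lemma neg_div_cexp_neg_sub_one (z : ℂ) :
    -z / (Complex.exp (-z) - 1) = z * Complex.exp z / (Complex.exp z - 1) := by
  by_cases h : Complex.exp z = 1
  · simp [h, Complex.exp_neg]
  have h₁ : Complex.exp z - 1 ≠ 0 := sub_ne_zero.mpr h
  have h₂ : Complex.exp (-z) - 1 ≠ 0 := by
    rw [Complex.exp_neg]; exact sub_ne_zero.mpr (inv_ne_one.mpr h)
  rw [div_eq_div_iff h₂ h₁, Complex.exp_neg]
  field_simp
  ring

noncomputable def centeredBernoulliGF (p : ℕ) (z : ℂ) : ℂ :=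
  (z / (Complex.exp z - 1)) ^ p * Complex.exp (p / 2 * z)

lemma centeredBernoulliGF_neg (p : ℕ) (z : ℂ) :
    centeredBernoulliGF p (-z) = centeredBernoulliGF p z := by
  rw [centeredBernoulliGF, centeredBernoulliGF, neg_div_cexp_neg_sub_one, mul_div_right_comm,
    mul_pow, ← Complex.exp_nat_mul, mul_assoc, ← Complex.exp_add]
  ring_nf

-- Identity theorem: the sum is analytic at `0` and vanishes on a punctured neighbourhood.
lemma coeff_eq_zero_of_hasSum_zero {c : ℕ → ℂ} {r : ℝ} (hr : 0 < r)
    (h : ∀ z : ℂ, z ≠ 0 → ‖z‖ < r → HasSum (fun n ↦ c n * z ^ n) 0) (n : ℕ) :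
    c n = 0 := by
  set q := FormalMultilinearSeries.ofScalars ℂ c
  have hsum : ∀ z : ℂ, z ≠ 0 → ‖z‖ < r → q.sum z = 0 := fun z hz hzr ↦ by
    simpa [q, FormalMultilinearSeries.sum, FormalMultilinearSeries.ofScalars_apply_eq, mul_comm]
      using (h z hz hzr).tsum_eq
  have hrad : 0 < q.radius := by
    lift r to NNReal using hr.le
    have hs :=
      (h ((r / 2 : NNReal) : ℂ) (by simpa using hr.ne') (by simpa using hr)).summable.norm
    refine lt_of_lt_of_le ?_ (q.le_radius_of_summable_norm (r := r / 2) ?_)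
    · simpa using hr.ne'
    · simpa [q, FormalMultilinearSeries.ofScalars_norm] using hs
  have hq : q = 0 := by
    by_contra hq
    obtain ⟨z, hne, hz, hzr⟩ :=
      (((q.hasFPowerSeriesOnBall hrad).hasFPowerSeriesAt.locally_ne_zero hq).and
        (eventually_mem_nhdsWithin.and
          (eventually_nhdsWithin_of_eventually_nhds (Metric.ball_mem_nhds 0 hr)))).exists
    exact hne (hsum z hz (by simpa using hzr))
  exact (FormalMultilinearSeries.ofScalars_eq_zero ℂ n).mp (congrFun hq n)

lemma coeff_eq_zero_of_odd_of_hasSum_even {c : ℕ → ℂ} {g : ℂ → ℂ} {r : ℝ} (hr : 0 < r)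
    (hg : ∀ z, g (-z) = g z)
    (h : ∀ z : ℂ, z ≠ 0 → ‖z‖ < r → HasSum (fun n ↦ c n * z ^ n) (g z))
    {n : ℕ} (hn : Odd n) : c n = 0 := by
  have hdiff : ∀ z : ℂ, z ≠ 0 → ‖z‖ < r →
      HasSum (fun n ↦ (c n - (-1) ^ n * c n) * z ^ n) 0 := by
    intro z hz hzr
    have hneg := h (-z) (neg_ne_zero.mpr hz) (by rwa [norm_neg])
    rw [hg] at hneg
    rw [← sub_self (g z)]
    refine ((h z hz hzr).sub hneg).congr_fun fun n ↦ ?_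
    rw [neg_pow]
    ring
  have := coeff_eq_zero_of_hasSum_zero hr hdiff n
  rw [hn.neg_one_pow] at this
  linear_combination this / 2

theorem HasSum.mul_cexp_of_egf {f : ℕ → ℂ} {S z : ℂ} (t : ℂ)
    (h : HasSum (fun n ↦ f n * z ^ n / n !) S) :
    HasSum (fun n ↦ (∑ m ∈ range (n + 1), f m * t ^ (n - m) * n.choose m) * z ^ n / n !)
      (S * Complex.exp (t * z)) := by
  have hexp : HasSum (fun n ↦ (t * z) ^ n / n !) (Complex.exp (t * z)) := by
    rw [Complex.exp_eq_exp_ℂ]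
    exact NormedSpace.expSeries_div_hasSum_exp (t * z)
  have hprod := hasSum_sum_range_mul_of_summable_norm h.summable.norm hexp.summable.norm
  rw [h.tsum_eq, hexp.tsum_eq] at hprod
  refine hprod.congr_fun fun n ↦ ?_
  rw [sum_mul, sum_div]
  refine sum_congr rfl fun m hm ↦ ?_
  have hmn : m ≤ n := Nat.lt_succ_iff.mp (mem_range.mp hm)
  have hn : (n ! : ℂ) ≠ 0 := Nat.cast_ne_zero.mpr n.factorial_ne_zero
  rw [Nat.cast_choose ℂ hmn, mul_pow, ← pow_mul_pow_sub z hmn]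
  field_simp

lemma map_C_mul_eq_mul {R : Type*} [CommRing R] (L : R[X] →ₗ[R] R) (a : R) (q : R[X]) :
    L (C a * q) = a * L q := by
  rw [← smul_eq_C_mul, map_smul, smul_eq_mul]

lemma map_X_add_C_pow {R : Type*} [CommRing R] (L : R[X] →ₗ[R] R) (t : R) (n : ℕ) :
    L ((X + C t) ^ n) = ∑ m ∈ range (n + 1), L (X ^ m) * t ^ (n - m) * n.choose m := by
  rw [add_pow, map_sum]
  refine sum_congr rfl fun m _ ↦ ?_
  rw [← C_pow, ← map_natCast C, mul_assoc, ← C_mul, mul_comm, map_C_mul_eq_mul]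
  ring

lemma map_X_sub_C_pow_eq_zero_of_odd (p : ℕ) (x : ℝ) (B : ℕ → ℝ)
    (hB : ∀ z : ℂ, z ≠ 0 → ‖z‖ < 1 →
      HasSum (fun n : ℕ => (B n : ℂ) * z ^ n / (n.factorial : ℂ))
        ((z / (Complex.exp z - 1)) ^ p * Complex.exp (x * z)))
    (L : ℝ[X] →ₗ[ℝ] ℝ) (hL : ∀ k : ℕ, L (X ^ k) = B k) {m : ℕ} (hm : Odd m) :
    L ((X - C (x - p / 2)) ^ m) = 0 := by
  set c : ℝ := x - p / 2
  have hmoment : ∀ n, (L ((X - C c) ^ n) : ℂ) =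
      ∑ m ∈ range (n + 1), (B m : ℂ) * (-c : ℂ) ^ (n - m) * n.choose m := by
    intro n
    rw [sub_eq_add_neg, ← C_neg, map_X_add_C_pow]
    push_cast [hL]
    rfl
  have hgf : ∀ z : ℂ, z ≠ 0 → ‖z‖ < 1 →
      HasSum (fun n ↦ (L ((X - C c) ^ n) / n ! : ℂ) * z ^ n) (centeredBernoulliGF p z) := by
    intro z hz hz1
    have hprod := (hB z hz hz1).mul_cexp_of_egf (-c)
    rw [mul_assoc, ← Complex.exp_add] at hprod
    convert hprod.congr_fun fun n ↦ ?_ using 1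
    · rw [centeredBernoulliGF]
      congr 2
      push_cast [c]
      ring
    · rw [hmoment]
      ring
  simpa [Nat.factorial_ne_zero] using
    coeff_eq_zero_of_odd_of_hasSum_even one_pos (centeredBernoulliGF_neg p) hgf hm

lemma map_comp_C_two_mul_sub_X_of_odd {R : Type*} [CommRing R] (L : R[X] →ₗ[R] R) (c : R)
    (hodd : ∀ m, Odd m → L ((X - C c) ^ m) = 0) (q : R[X]) :
    L (q.comp (C (2 * c) - X)) = L q := by
  have hneg : ∀ m, L ((-(X - C c)) ^ m) = L ((X - C c) ^ m) := fun m ↦ by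
    rcases Nat.even_or_odd m with hm | hm
    · rw [hm.neg_pow]
    · rw [hm.neg_pow, map_neg, hodd m hm, neg_zero]
  have hpow : ∀ k, L ((C (2 * c) - X) ^ k) = L (X ^ k) := fun k ↦ by
    conv_rhs => rw [show (X : R[X]) = (X - C c) + C c by ring]
    rw [show C (2 * c) - X = -(X - C c) + C c by rw [two_mul, C_add]; ring,
      add_pow, add_pow, map_sum, map_sum]
    refine sum_congr rfl fun m _ ↦ ?_
    rw [← C_pow, ← map_natCast C, mul_assoc, mul_assoc, ← C_mul, mul_comm, map_C_mul_eq_mul,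
      hneg, ← map_C_mul_eq_mul, mul_comm]
  induction q using Polynomial.induction_on' with
  | add q r hq hr => rw [add_comp, map_add, map_add, hq, hr]
  | monomial k a =>
    rw [← C_mul_X_pow_eq_monomial, mul_comp, C_comp, X_pow_comp, map_C_mul_eq_mul,
      map_C_mul_eq_mul, hpow]

section OrthogonalPolynomials

variable {K : Type*} [Field K] {L : K[X] →ₗ[K] K} {P : ℕ → K[X]}

structure IsMonicOrthogonal (L : K[X] →ₗ[K] K) (P : ℕ → K[X]) : Prop where
  monic : ∀ n, (P n).Monic
  natDegree_eq : ∀ n, (P n).natDegree = n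
  orthogonal : ∀ r n, r < n → L (X ^ r * P n) = 0
  nondegenerate : ∀ n, L (X ^ n * P n) ≠ 0

lemma map_mul_eq_zero_of_degree_lt (horth : ∀ r n : ℕ, r < n → L (X ^ r * P n) = 0)
    {n : ℕ} {q : K[X]} (hq : q.degree < n) : L (q * P n) = 0 := by
  rw [q.as_sum_support_C_mul_X_pow, sum_mul, map_sum]
  refine sum_eq_zero fun i hi ↦ ?_
  rw [mul_assoc, map_C_mul_eq_mul, horth i n ?_, mul_zero]
  by_contra! hni
  exact mem_support_iff.mp hi (coeff_eq_zero_of_degree_lt (hq.trans_le (by exact_mod_cast hni)))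

lemma degree_sub_C_coeff_mul_lt {Q : K[X]} (hQ : Q.Monic) {n : ℕ} (hQn : Q.natDegree = n)
    {D : K[X]} (hD : D.natDegree ≤ n) : (D - C (D.coeff n) * Q).degree < n := by
  rw [degree_lt_iff_coeff_zero]
  intro m hm
  rcases hm.lt_or_eq with hm | rfl
  · rw [coeff_sub, coeff_C_mul, coeff_eq_zero_of_natDegree_lt (hD.trans_lt hm),
      coeff_eq_zero_of_natDegree_lt (p := Q) (hQn ▸ hm), mul_zero, sub_zero]
  · rw [coeff_sub, coeff_C_mul, ← hQn, hQ.coeff_natDegree, mul_one, sub_self]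

namespace IsMonicOrthogonal

lemma eq_zero_of_degree_lt (hP : IsMonicOrthogonal L P) (n : ℕ) {D : K[X]} (hD : D.degree < n)
    (hDorth : ∀ r < n, L (X ^ r * D) = 0) : D = 0 := by
  induction n generalizing D with
  | zero => simpa using hD
  | succ n ih =>
    have hrem : D - C (D.coeff n) * P n = 0 := by
      refine ih (degree_sub_C_coeff_mul_lt (hP.monic n) (hP.natDegree_eq n)
        (natDegree_le_of_degree_le (Order.le_of_lt_succ hD))) fun r hr ↦ ?_
      rw [mul_sub, map_sub, mul_left_comm, map_C_mul_eq_mul, hDorth r (by omega),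
        hP.orthogonal r n hr, mul_zero, sub_zero]
    rw [sub_eq_zero] at hrem
    have hcoeff : D.coeff n * L (X ^ n * P n) = 0 := by
      rw [← map_C_mul_eq_mul, mul_left_comm, ← hrem]
      exact hDorth n n.lt_succ_self
    rw [hrem, (mul_eq_zero.mp hcoeff).resolve_right (hP.nondegenerate n), C_0, zero_mul]

lemma eq_of_monic (hP : IsMonicOrthogonal L P) {n : ℕ} {E : K[X]} (hE : E.Monic)
    (hEn : E.natDegree = n) (hEorth : ∀ r < n, L (X ^ r * E) = 0) : E = P n := by
  have hcoeff : E.coeff n = 1 := hEn ▸ hE.coeff_natDegree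
  refine sub_eq_zero.mp (hP.eq_zero_of_degree_lt n ?_ fun r hr ↦ ?_)
  · simpa [hcoeff] using degree_sub_C_coeff_mul_lt (hP.monic n) (hP.natDegree_eq n) hEn.le
  · rw [mul_sub, map_sub, hEorth r hr, hP.orthogonal r n hr, sub_zero]

lemma comp_C_two_mul_sub_X (hP : IsMonicOrthogonal L P) {c : K}
    (hsym : ∀ q : K[X], L (q.comp (C (2 * c) - X)) = L q) (n : ℕ) :
    (P n).comp (C (2 * c) - X) = C ((-1) ^ n) * P n := by
  set σ : K[X] := C (2 * c) - X
  have hσ : σ = C (-1) * X + C (2 * c) := by simp only [σ, C_neg, C_1]; ring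
  have hσσ : σ.comp σ = X := by simp only [σ, sub_comp, C_comp, X_comp]; ring
  have hσdeg : σ.natDegree = 1 := by rw [hσ]; exact natDegree_linear (by norm_num)
  have hsign : ((-1 : K) ^ n) * (-1) ^ n = 1 := by rw [← mul_pow]; norm_num
  set E := C ((-1 : K) ^ n) * (P n).comp σ
  have hEn : E.natDegree = n := by
    rw [natDegree_C_mul (by simp), natDegree_comp, hσdeg, hP.natDegree_eq n, mul_one]
  have hE : E.Monic := by
    rw [Monic, leadingCoeff_mul, leadingCoeff_C, leadingCoeff_comp (by rw [hσdeg]; norm_num),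
      (hP.monic n).leadingCoeff, hP.natDegree_eq n, hσ, leadingCoeff_linear (by norm_num),
      one_mul, hsign]
  have hEorth : ∀ r < n, L (X ^ r * E) = 0 := fun r hr ↦ by
    rw [mul_left_comm, map_C_mul_eq_mul, ← hsym, mul_comp, X_pow_comp, comp_assoc, hσσ, comp_X,
      map_mul_eq_zero_of_degree_lt hP.orthogonal (degree_le_natDegree.trans_lt ?_), mul_zero]
    rw [natDegree_pow, hσdeg, mul_one]
    exact_mod_cast hr
  calc (P n).comp σ = C ((-1) ^ n) * E := by rw [← mul_assoc, ← C_mul, hsign, C_1, one_mul]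
    _ = C ((-1) ^ n) * P n := by rw [hP.eq_of_monic hE hEn hEorth]

lemma map_mul_self_ne_zero (hP : IsMonicOrthogonal L P) (n : ℕ) : L (P n * P n) ≠ 0 := by
  have hlead : (P n).coeff n = 1 := by
    simpa [hP.natDegree_eq n] using (hP.monic n).coeff_natDegree
  have hlower : (P n - X ^ n).degree < (n : WithBot ℕ) := by
    simpa [hlead] using
      degree_sub_C_coeff_mul_lt (monic_X_pow n) (natDegree_X_pow n) (hP.natDegree_eq n).le
  rw [show P n * P n = X ^ n * P n + (P n - X ^ n) * P n by ring, map_add,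
    map_mul_eq_zero_of_degree_lt hP.orthogonal hlower, add_zero]
  exact hP.nondegenerate n

lemma map_X_sub_C_mul_mul_self_eq_zero_of_symmetric [CharZero K] (hP : IsMonicOrthogonal L P)
    {c : K} (hsym : ∀ q : K[X], L (q.comp (C (2 * c) - X)) = L q) (n : ℕ) :
    L ((X - C c) * (P n * P n)) = 0 := by
  have hsign : C ((-1 : K) ^ n) * C ((-1) ^ n) = 1 := by rw [← C_mul, ← mul_pow]; norm_num
  have hodd : ((X - C c) * (P n * P n)).comp (C (2 * c) - X) = -((X - C c) * (P n * P n)) := by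
    rw [mul_comp, mul_comp, hP.comp_C_two_mul_sub_X hsym n, sub_comp, X_comp, C_comp, two_mul,
      C_add]
    linear_combination (C c - X) * (P n * P n) * hsign
  have := hsym ((X - C c) * (P n * P n))
  rw [hodd, map_neg] at this
  linear_combination -this / 2

end IsMonicOrthogonal

lemma map_X_sub_C_mul_mul_self_eq_zero_of_recurrence
    (horth : ∀ r n : ℕ, r < n → L (X ^ r * P n) = 0) {n : ℕ} (hPn : (P n).natDegree = n)
    {a : K} {Q : K[X]} (hQ : Q.degree < n) (hrec : P (n + 1) = (X - C a) * P n - Q) :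
    L ((X - C a) * (P n * P n)) = 0 := by
  have hdeg : (P n).degree < ↑(n + 1) :=
    (degree_le_of_natDegree_le hPn.le).trans_lt (by exact_mod_cast n.lt_succ_self)
  rw [show (X - C a) * (P n * P n) = P n * P (n + 1) + Q * P n by rw [hrec]; ring, map_add,
    map_mul_eq_zero_of_degree_lt horth hdeg, map_mul_eq_zero_of_degree_lt horth hQ, add_zero]

end OrthogonalPolynomials

theorem stmt_18_general (p : ℕ) (x : ℝ)
    (B : ℕ → ℝ)
    (hB : ∀ z : ℂ, z ≠ 0 → ‖z‖ < 1 →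
      HasSum (fun n : ℕ => (B n : ℂ) * z ^ n / (n.factorial : ℂ))
        ((z / (Complex.exp z - 1)) ^ p * Complex.exp (x * z)))
    (L : Polynomial ℝ →ₗ[ℝ] ℝ)
    (hL : ∀ k : ℕ, L (X ^ k) = B k)
    (a b : ℕ → ℝ)
    (P : ℕ → Polynomial ℝ)
    (hmonic : ∀ n : ℕ, (P n).Monic ∧ (P n).natDegree = n)
    (hP0 : P 0 = 1)
    (hP1 : P 1 = X - C (a 0))
    (hPrec : ∀ n : ℕ, 1 ≤ n →
      P (n + 1) = (X - C (a n)) * P n - C (b n) * P (n - 1))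
    (horth : ∀ r n : ℕ, r < n → L (X ^ r * P n) = 0)
    (hnondeg : ∀ n : ℕ, L (X ^ n * P n) ≠ 0) :
    ∀ n : ℕ, a n = x - (p : ℝ) / 2 := by
  set c : ℝ := x - p / 2
  have hP : IsMonicOrthogonal L P :=
    ⟨fun n ↦ (hmonic n).1, fun n ↦ (hmonic n).2, horth, hnondeg⟩
  have hsym : ∀ q : ℝ[X], L (q.comp (C (2 * c) - X)) = L q :=
    map_comp_C_two_mul_sub_X_of_odd L c fun m hm ↦ map_X_sub_C_pow_eq_zero_of_odd p x B hB L hL hm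
  intro n
  obtain ⟨Q, hQ, hrec⟩ :
      ∃ Q : ℝ[X], Q.degree < n ∧ P (n + 1) = (X - C (a n)) * P n - Q := by
    rcases n with _ | n
    · exact ⟨0, by simp, by rw [hP1, hP0]; ring⟩
    · refine ⟨C (b (n + 1)) * P n, ?_, by simpa using hPrec (n + 1) (by omega)⟩
      rw [← smul_eq_C_mul]
      exact (degree_smul_le _ _).trans_lt <| (degree_le_of_natDegree_le (hmonic n).2.le).trans_lt
        (by exact_mod_cast n.lt_succ_self)
  have hrecL := map_X_sub_C_mul_mul_self_eq_zero_of_recurrence horth (hmonic n).2 hQ hrec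
  have hsymL := hP.map_X_sub_C_mul_mul_self_eq_zero_of_symmetric hsym n
  have hdiff : (c - a n) * L (P n * P n) = 0 := by
    rw [← map_C_mul_eq_mul, C_sub, show (C c - C (a n)) * (P n * P n) =
      (X - C (a n)) * (P n * P n) - (X - C c) * (P n * P n) by ring, map_sub, hrecL, hsymL,
      sub_zero]
  exact (sub_eq_zero.mp ((mul_eq_zero.mp hdiff).resolve_right (hP.map_mul_self_ne_zero n))).symm

/-- if `(P_n)` are the monic orthogonal polynomials with respect
to the higher-order Bernoulli polynomial moments `B_k^(p)(x)` (EGF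
`(z/(e^z-1))^p e^{xz} = Σ B_n^(p)(x) z^n/n!`), with three-term recurrence
coefficients `a_n, b_n` and nondegeneracy `L^(p)(y^n P_n) ≠ 0`, then
`a_n = x - p/2` for every `n`. -/
theorem stmt_18 (p : ℕ) (hp : 1 ≤ p) (x : ℝ)
    (B : ℕ → ℝ)
    (hB : ∀ z : ℂ, z ≠ 0 → ‖z‖ < 1 →
      HasSum (fun n : ℕ => (B n : ℂ) * z ^ n / (n.factorial : ℂ))
        ((z / (Complex.exp z - 1)) ^ p * Complex.exp (x * z)))
    (L : Polynomial ℝ →ₗ[ℝ] ℝ)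
    (hL : ∀ k : ℕ, L (X ^ k) = B k)
    (a b : ℕ → ℝ)
    (P : ℕ → Polynomial ℝ)
    (hmonic : ∀ n : ℕ, (P n).Monic ∧ (P n).natDegree = n)
    (hP0 : P 0 = 1)
    (hP1 : P 1 = X - C (a 0))
    (hPrec : ∀ n : ℕ, 1 ≤ n →
      P (n + 1) = (X - C (a n)) * P n - C (b n) * P (n - 1))
    (horth : ∀ r n : ℕ, r < n → L (X ^ r * P n) = 0)
    (hnondeg : ∀ n : ℕ, L (X ^ n * P n) ≠ 0) :
    ∀ n : ℕ, a n = x - (p : ℝ) / 2 :=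
  stmt_18_general p x B hB L hL a b P hmonic hP0 hP1 hPrec horth hnondeg
end
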